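/- arXiv:2605.27175 — 5 statements merged into one kernel-verified Lean document; each statement's English description precedes it below -/
import Mathlib

section
/- Strong duality holds for quadratically regularized optimal transport: QOT_ε(P,Q) = sup over (f,g) ∈ L²(P) × L²(Q) of Γ(f,g). -/
/-!
Weak duality is Young's inequality `h s ≤ (s₊)² / (2ε) + ε h² / 2`, integrated against `P ⊗ Q`
with `h` the density of a coupling and `s = f ⊕ g - c`.

For strong duality, perturb the cost. The dual value `V(c') = sup_{f,g} Γ_{c'}(f, g)` is concave
in `c' ∈ L²(P ⊗ Q)` and bounded below near `c` (take `f = g = 0`), so Hahn–Banach gives a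
supergradient `h ∈ L²` of `V` at `c`. Testing the supergradient inequality against the
perturbations `-c + t 1_s`, `t (f ⊕ g)` and `-c - ε h` shows, in turn, that `h ≥ 0`, that `h`
has marginals `P` and `Q`, and that `∫ h c + (ε/2) ∫ h² ≤ V(c)`; so `h · (P ⊗ Q)` is a feasible
coupling whose cost is at most the dual value.
-/

open MeasureTheory Metric
open scoped ENNReal

/-- The dual QOT objective `Γ(f,g)`. -/
noncomputable def Gamma {d : ℕ} (ε : ℝ) (P Q : Measure (EuclideanSpace ℝ (Fin d)))
    (c : EuclideanSpace ℝ (Fin d) → EuclideanSpace ℝ (Fin d) → ℝ)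
    (f g : EuclideanSpace ℝ (Fin d) → ℝ) : ℝ :=
  ∫ p, (f p.1 + g p.2 - (1 / (2 * ε)) * (max (f p.1 + g p.2 - c p.1 p.2) 0) ^ 2) ∂(P.prod Q)

/-- The primal QOT cost of a coupling `π` (for `π ≪ P ⊗ Q`). -/
noncomputable def primalCost {d : ℕ} (ε : ℝ) (P Q : Measure (EuclideanSpace ℝ (Fin d)))
    (c : EuclideanSpace ℝ (Fin d) → EuclideanSpace ℝ (Fin d) → ℝ)
    (π : Measure (EuclideanSpace ℝ (Fin d) × EuclideanSpace ℝ (Fin d))) : ℝ :=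
  (∫ p, c p.1 p.2 ∂π) + (ε / 2) * ∫ p, ((π.rnDeriv (P.prod Q) p).toReal) ^ 2 ∂(P.prod Q)

/-- Feasible couplings: elements of `Π(P,Q)` that are absolutely continuous w.r.t. `P ⊗ Q`
with square-integrable density (all other couplings have primal cost `+∞` by convention). -/
def IsFeasible {d : ℕ} (P Q : Measure (EuclideanSpace ℝ (Fin d)))
    (π : Measure (EuclideanSpace ℝ (Fin d) × EuclideanSpace ℝ (Fin d))) : Prop :=
  IsProbabilityMeasure π ∧ π.fst = P ∧ π.snd = Q ∧ π ≪ P.prod Q ∧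
    MemLp (fun p => (π.rnDeriv (P.prod Q) p).toReal) 2 (P.prod Q)

open Set Filter

lemma nonpos_of_forall_nonneg_mul_le {x C : ℝ} (h : ∀ t, 0 ≤ t → t * x ≤ C) : x ≤ 0 := by
  by_contra! hx
  have := h ((|C| + 1) / x) (by positivity)
  rw [div_mul_cancel₀ _ hx.ne'] at this
  linarith [le_abs_self C]

lemma eq_zero_of_forall_mul_le {x C : ℝ} (h : ∀ t, t * x ≤ C) : x = 0 :=
  le_antisymm (nonpos_of_forall_nonneg_mul_le fun t _ => h t)
    (neg_nonpos.1 (nonpos_of_forall_nonneg_mul_le fun t _ => by simpa using h (-t)))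

lemma max_zero_sq_le_sq (s : ℝ) : max s 0 ^ 2 ≤ s ^ 2 := by
  rw [sq_le_sq, abs_of_nonneg (le_max_right _ _)]
  exact max_le (le_abs_self _) (abs_nonneg _)

lemma mul_le_max_zero_sq_add_sq {ε : ℝ} (hε : 0 < ε) (s : ℝ) {t : ℝ} (ht : 0 ≤ t) :
    t * s ≤ 1 / (2 * ε) * max s 0 ^ 2 + ε / 2 * t ^ 2 := by
  have hmax : t * s ≤ t * max s 0 := mul_le_mul_of_nonneg_left (le_max_left _ _) ht
  have hsq : 0 ≤ (max s 0 - ε * t) ^ 2 / (2 * ε) := by positivity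
  have hexp : (max s 0 - ε * t) ^ 2 / (2 * ε) =
      1 / (2 * ε) * max s 0 ^ 2 + ε / 2 * t ^ 2 - t * max s 0 := by
    field_simp
    ring
  linarith

lemma convexOn_max_zero_sq : ConvexOn ℝ univ fun s : ℝ => max s 0 ^ 2 :=
  ((convexOn_id convex_univ).sup (convexOn_const 0 convex_univ)).pow
    (fun _ _ => le_max_right _ _) 2

theorem exists_le_add_of_ball_prod_Iio_subset {E : Type*} [NormedAddCommGroup E]
    [NormedSpace ℝ E] {S : Set (E × ℝ)} (hS : Convex ℝ S) {r M D : ℝ} (hr : 0 < r)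
    (hball : ball (0 : E) r ×ˢ Iio M ⊆ S) (hD : ((0 : E), D) ∉ S) :
    ∃ φ : StrongDual ℝ E, ∀ p ∈ S, p.2 ≤ D + φ p.1 := by
  have hint : ball (0 : E) r ×ˢ Iio M ⊆ interior S :=
    (isOpen_ball.prod isOpen_Iio).subset_interior_iff.2 hball
  have hmem : ∀ t < M, ((0 : E), t) ∈ interior S := fun t ht => hint ⟨mem_ball_self hr, ht⟩
  obtain ⟨ℓ, hℓ⟩ := geometric_hahn_banach_open_point hS.interior isOpen_interior
    (fun h => hD (interior_subset h))
  have hℓS : ∀ p ∈ S, ℓ p ≤ ℓ (0, D) := by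
    have hne : (interior S).Nonempty := ⟨_, hmem (M - 1) (by linarith)⟩
    intro p hp
    refine closure_minimal (fun a ha => (hℓ a ha).le) (isClosed_le ℓ.continuous continuous_const) ?_
    rw [hS.closure_interior_eq_closure_of_nonempty_interior hne]
    exact subset_closure hp
  have hsplit : ∀ u t, ℓ (u, t) = ℓ (u, 0) + t * ℓ (0, 1) := by
    intro u t
    rw [← smul_eq_mul, ← map_smul, ← map_add]
    simp
  set a := ℓ (0, 1)
  have ha : 0 < a := by
    have h := hℓ _ (hmem (min M D - 1) (by linarith [min_le_left M D]))
    rw [hsplit, hsplit 0 D] at h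
    nlinarith [min_le_right M D]
  refine ⟨(-a⁻¹) • ℓ.comp (ContinuousLinearMap.inl ℝ E ℝ), fun ⟨u, t⟩ hp => ?_⟩
  have h := hℓS _ hp
  rw [hsplit, hsplit 0 D] at h
  simp only [Prod.mk_zero_zero, map_zero, zero_add] at h
  calc t ≤ (D * a - ℓ (u, 0)) / a := by rw [le_div_iff₀ ha]; linarith
    _ = D + ((-a⁻¹) • ℓ.comp (ContinuousLinearMap.inl ℝ E ℝ)) u := by
      simp only [FunLike.coe_smul, ContinuousLinearMap.coe_comp, Pi.smul_apply,
        Function.comp_apply, ContinuousLinearMap.inl_apply, smul_eq_mul]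
      field_simp
      ring

section QuadraticPenalty

variable {α : Type*} [MeasurableSpace α] {μ : Measure α} {ε : ℝ} {w : α → ℝ}

noncomputable def quadraticPenalty (ε : ℝ) (μ : Measure α) (w : α → ℝ) : ℝ :=
  1 / (2 * ε) * ∫ a, max (w a) 0 ^ 2 ∂μ

noncomputable def densityCost (ε : ℝ) (μ : Measure α) (c h : α → ℝ) : ℝ :=
  ∫ a, h a * c a ∂μ + ε / 2 * ∫ a, h a ^ 2 ∂μ

lemma convex_setOf_memLp (p : ℝ≥0∞) : Convex ℝ {w : α → ℝ | MemLp w p μ} :=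
  fun _ hu _ hv a b _ _ _ => (hu.const_smul a).add (hv.const_smul b)

lemma integrable_max_zero_sq (hw : MemLp w 2 μ) : Integrable (fun a => max (w a) 0 ^ 2) μ := by
  refine hw.integrable_sq.mono' ?_ (ae_of_all _ fun a => ?_)
  · exact ((hw.aestronglyMeasurable.aemeasurable.max aemeasurable_const).pow_const 2
      ).aestronglyMeasurable
  · rw [Real.norm_of_nonneg (sq_nonneg _)]
    exact max_zero_sq_le_sq (w a)

lemma quadraticPenalty_congr_ae {w' : α → ℝ} (h : w =ᵐ[μ] w') :
    quadraticPenalty ε μ w = quadraticPenalty ε μ w' := by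
  unfold quadraticPenalty
  congr 1
  exact integral_congr_ae (h.mono fun a ha => by simp only [ha])

lemma quadraticPenalty_eq_zero_of_nonpos (h : w ≤ᵐ[μ] 0) : quadraticPenalty ε μ w = 0 := by
  rw [quadraticPenalty, integral_eq_zero_of_ae (h.mono fun a ha => by
    simp [max_eq_right (show w a ≤ 0 from ha)]), mul_zero]

lemma quadraticPenalty_eq_of_nonneg (h : 0 ≤ᵐ[μ] w) :
    quadraticPenalty ε μ w = 1 / (2 * ε) * ∫ a, w a ^ 2 ∂μ := by
  unfold quadraticPenalty
  congr 1
  exact integral_congr_ae (h.mono fun a ha => by simp [max_eq_left (show 0 ≤ w a from ha)])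

lemma quadraticPenalty_le (hε : 0 < ε) (hw : MemLp w 2 μ) :
    quadraticPenalty ε μ w ≤ 1 / (2 * ε) * ∫ a, w a ^ 2 ∂μ :=
  mul_le_mul_of_nonneg_left (integral_mono (integrable_max_zero_sq hw) hw.integrable_sq
    fun a => max_zero_sq_le_sq (w a)) (by positivity)

lemma convexOn_quadraticPenalty (hε : 0 ≤ ε) :
    ConvexOn ℝ {w : α → ℝ | MemLp w 2 μ} (quadraticPenalty ε μ) := by
  refine ⟨convex_setOf_memLp 2, fun u hu v hv a b ha hb hab => ?_⟩
  have hu' := integrable_max_zero_sq hu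
  have hv' := integrable_max_zero_sq hv
  calc quadraticPenalty ε μ (a • u + b • v)
      ≤ 1 / (2 * ε) * ∫ x, (a * max (u x) 0 ^ 2 + b * max (v x) 0 ^ 2) ∂μ := by
        refine mul_le_mul_of_nonneg_left (integral_mono
          (integrable_max_zero_sq ((hu.const_smul a).add (hv.const_smul b)))
          ((hu'.const_mul a).add (hv'.const_mul b)) fun x => ?_) (by positivity)
        exact convexOn_max_zero_sq.2 (mem_univ (u x)) (mem_univ (v x)) ha hb hab
    _ = a • quadraticPenalty ε μ u + b • quadraticPenalty ε μ v := by
        rw [integral_add (hu'.const_mul a) (hv'.const_mul b), integral_const_mul,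
          integral_const_mul, quadraticPenalty, quadraticPenalty, smul_eq_mul, smul_eq_mul]
        ring

lemma integral_mul_sub_quadraticPenalty_le (hε : 0 < ε) {h : α → ℝ} (hh : MemLp h 2 μ)
    (h0 : 0 ≤ᵐ[μ] h) (hw : MemLp w 2 μ) :
    ∫ a, h a * w a ∂μ - quadraticPenalty ε μ w ≤ ε / 2 * ∫ a, h a ^ 2 ∂μ := by
  have hmax := (integrable_max_zero_sq hw).const_mul (1 / (2 * ε))
  have hsq := hh.integrable_sq.const_mul (ε / 2)
  have hhw : Integrable (fun a => h a * w a) μ := hh.integrable_mul hw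
  have := calc ∫ a, h a * w a ∂μ
      ≤ ∫ a, (1 / (2 * ε) * max (w a) 0 ^ 2 + ε / 2 * h a ^ 2) ∂μ :=
        integral_mono_ae hhw (hmax.add hsq) (h0.mono fun a ha =>
          mul_le_max_zero_sq_add_sq hε (w a) ha)
    _ = quadraticPenalty ε μ w + ε / 2 * ∫ a, h a ^ 2 ∂μ := by
        rw [integral_add hmax hsq, integral_const_mul, integral_const_mul, quadraticPenalty]
  linarith

lemma densityCost_congr_ae {c h h' : α → ℝ} (hh : h =ᵐ[μ] h') :
    densityCost ε μ c h = densityCost ε μ c h' := by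
  have hc : (fun a => h a * c a) =ᵐ[μ] fun a => h' a * c a := hh.mono fun a ha => by simp only [ha]
  have hsq : (fun a => h a ^ 2) =ᵐ[μ] fun a => h' a ^ 2 := hh.mono fun a ha => by simp only [ha]
  rw [densityCost, densityCost, integral_congr_ae hc, integral_congr_ae hsq]

end QuadraticPenalty

section LTwo

variable {α : Type*} [MeasurableSpace α] {μ : Measure α}

lemma integral_sq_eq_norm_sq (u : Lp ℝ 2 μ) : ∫ a, u a ^ 2 ∂μ = ‖u‖ ^ 2 := by
  rw [← real_inner_self_eq_norm_sq, L2.inner_def]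
  simp only [Real.inner_apply, sq]

lemma exists_memLp_apply_toLp_eq_integral_mul (φ : StrongDual ℝ (Lp ℝ 2 μ)) :
    ∃ h : α → ℝ, MemLp h 2 μ ∧ ∀ u (hu : MemLp u 2 μ), φ (hu.toLp u) = ∫ a, h a * u a ∂μ := by
  refine ⟨(InnerProductSpace.toDual ℝ (Lp ℝ 2 μ)).symm φ, Lp.memLp _, fun u hu => ?_⟩
  rw [← InnerProductSpace.toDual_symm_apply, L2.inner_def]
  exact integral_congr_ae (hu.coeFn_toLp.mono fun a ha => by simp only [Real.inner_apply, ha])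

lemma Continuous.memLp_of_ae_mem_isCompact [TopologicalSpace α] [OpensMeasurableSpace α]
    [IsFiniteMeasure μ] {f : α → ℝ} (hf : Continuous f) {K : Set α} (hK : IsCompact K)
    (hμK : ∀ᵐ x ∂μ, x ∈ K) (p : ℝ≥0∞) : MemLp f p μ := by
  obtain ⟨C, hC⟩ := hK.exists_bound_of_continuousOn hf.continuousOn
  exact MemLp.of_bound hf.aestronglyMeasurable C (hμK.mono hC)

end LTwo

section Duality

variable {X Y : Type*} [MeasurableSpace X] [MeasurableSpace Y] {P : Measure X} {Q : Measure Y}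
  {ε : ℝ} {c : X × Y → ℝ}

noncomputable def dualObjective (ε : ℝ) (P : Measure X) (Q : Measure Y) (c : X × Y → ℝ)
    (f : X → ℝ) (g : Y → ℝ) : ℝ :=
  ∫ x, f x ∂P + ∫ y, g y ∂Q - quadraticPenalty ε (P.prod Q) (fun p => f p.1 + g p.2 - c p)

structure IsCouplingDensity (P : Measure X) (Q : Measure Y) (h : X × Y → ℝ) : Prop where
  memLp : MemLp h 2 (P.prod Q)
  nonneg : 0 ≤ᵐ[P.prod Q] h
  integral_mul_fst : ∀ f, MemLp f 2 P → ∫ p, h p * f p.1 ∂(P.prod Q) = ∫ x, f x ∂P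
  integral_mul_snd : ∀ g, MemLp g 2 Q → ∫ p, h p * g p.2 ∂(P.prod Q) = ∫ y, g y ∂Q

noncomputable def dualHypograph (ε : ℝ) (P : Measure X) (Q : Measure Y) (c : X × Y → ℝ) :
    Set (Lp ℝ 2 (P.prod Q) × ℝ) :=
  {p | ∃ f g, MemLp f 2 P ∧ MemLp g 2 Q ∧ p.2 < dualObjective ε P Q (c + p.1) f g}

/-- For `D = sup_{f,g} dualObjective ε P Q c f g`, this says that `h` is a supergradient at `c` of
the concave dual value `c' ↦ sup_{f,g} dualObjective ε P Q c' f g`. -/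
def IsDualSupergradient (ε : ℝ) (P : Measure X) (Q : Measure Y) (c : X × Y → ℝ) (D : ℝ)
    (h : X × Y → ℝ) : Prop :=
  MemLp h 2 (P.prod Q) ∧ ∀ u f g, MemLp u 2 (P.prod Q) → MemLp f 2 P → MemLp g 2 Q →
    dualObjective ε P Q (c + u) f g ≤ D + ∫ p, h p * u p ∂(P.prod Q)

lemma dualObjective_zero_zero :
    dualObjective ε P Q c 0 0 = -quadraticPenalty ε (P.prod Q) (-c) := by
  simp only [dualObjective, Pi.zero_apply, integral_zero, zero_add, zero_sub]
  rfl

lemma dualObjective_congr_ae {c' : X × Y → ℝ} (hcc' : c =ᵐ[P.prod Q] c') (f : X → ℝ)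
    (g : Y → ℝ) : dualObjective ε P Q c f g = dualObjective ε P Q c' f g := by
  have hw : (fun p => f p.1 + g p.2 - c p) =ᵐ[P.prod Q] fun p => f p.1 + g p.2 - c' p :=
    hcc'.mono fun p hp => by simp only [hp]
  rw [dualObjective, dualObjective, quadraticPenalty_congr_ae hw]

lemma isCouplingDensity_one [IsProbabilityMeasure P] [IsProbabilityMeasure Q] :
    IsCouplingDensity P Q 1 :=
  ⟨memLp_const 1, ae_of_all _ fun _ => zero_le_one, fun f _ => by simp [integral_fun_fst],
    fun g _ => by simp [integral_fun_snd]⟩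

lemma ball_prod_Iio_subset_dualHypograph (hε : 0 < ε) (hc : MemLp c 2 (P.prod Q)) :
    ball 0 1 ×ˢ Iio (-(1 / ε * (∫ p, c p ^ 2 ∂(P.prod Q) + 1))) ⊆ dualHypograph ε P Q c := by
  rintro ⟨u, t⟩ ⟨hu, ht : t < _⟩
  refine ⟨0, 0, .zero, .zero, ?_⟩
  have hcu := hc.add (Lp.memLp u)
  have hu1 : ∫ p, u p ^ 2 ∂(P.prod Q) ≤ 1 := by
    rw [integral_sq_eq_norm_sq, sq_le_one_iff₀ (norm_nonneg u)]
    exact (mem_ball_zero_iff.1 hu).le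
  have hsq : ∫ p, (-(c + ⇑u)) p ^ 2 ∂(P.prod Q) ≤
      2 * (∫ p, c p ^ 2 ∂(P.prod Q) + ∫ p, u p ^ 2 ∂(P.prod Q)) := by
    have h2 := (hc.integrable_sq.add (Lp.memLp u).integrable_sq).const_mul 2
    rw [← integral_add hc.integrable_sq (Lp.memLp u).integrable_sq, ← integral_const_mul]
    exact integral_mono hcu.neg.integrable_sq h2 fun p => by
      simpa only [Pi.neg_apply, Pi.add_apply, neg_sq] using add_sq_le
  calc t < -(1 / ε * (∫ p, c p ^ 2 ∂(P.prod Q) + 1)) := ht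
    _ ≤ -(1 / ε * (∫ p, c p ^ 2 ∂(P.prod Q) + ∫ p, u p ^ 2 ∂(P.prod Q))) :=
      neg_le_neg (by gcongr)
    _ = -(1 / (2 * ε) * (2 * (∫ p, c p ^ 2 ∂(P.prod Q) + ∫ p, u p ^ 2 ∂(P.prod Q)))) := by
      ring
    _ ≤ -(1 / (2 * ε) * ∫ p, (-(c + ⇑u)) p ^ 2 ∂(P.prod Q)) :=
      neg_le_neg (mul_le_mul_of_nonneg_left hsq (by positivity))
    _ ≤ dualObjective ε P Q (c + ⇑u) 0 0 := by
      rw [dualObjective_zero_zero, neg_le_neg_iff]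
      exact quadraticPenalty_le hε hcu.neg

lemma zero_mk_notMem_dualHypograph {D : ℝ}
    (hD : ∀ f g, MemLp f 2 P → MemLp g 2 Q → dualObjective ε P Q c f g ≤ D) :
    ((0 : Lp ℝ 2 (P.prod Q)), D) ∉ dualHypograph ε P Q c := by
  rintro ⟨f, g, hf, hg, hlt⟩
  have hc0 : c + ⇑(0 : Lp ℝ 2 (P.prod Q)) =ᵐ[P.prod Q] c :=
    (Lp.coeFn_zero ℝ 2 (P.prod Q)).mono fun p hp => by
      rw [Pi.add_apply, hp, Pi.zero_apply, add_zero]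
  rw [dualObjective_congr_ae hc0] at hlt
  exact (hD f g hf hg).not_gt hlt

lemma IsDualSupergradient.densityCost_le {D : ℝ} {h : X × Y → ℝ}
    (hsup : IsDualSupergradient ε P Q c D h) (hε : 0 < ε) (hc : MemLp c 2 (P.prod Q))
    (h0 : 0 ≤ᵐ[P.prod Q] h) : densityCost ε (P.prod Q) c h ≤ D := by
  -- Perturbing the cost to `-ε h` turns Young's inequality into an equality.
  have key := hsup.2 (-c - ε • h) 0 0 (hc.neg.sub (hsup.1.const_smul ε)) .zero .zero
  have hval : dualObjective ε P Q (c + (-c - ε • h)) 0 0 =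
      -(ε / 2 * ∫ p, h p ^ 2 ∂(P.prod Q)) := by
    have hw : -(c + (-c - ε • h)) = ε • h := by abel
    rw [dualObjective_zero_zero, hw, quadraticPenalty_eq_of_nonneg (h0.mono fun p hp => by
      simpa using mul_nonneg hε.le hp)]
    simp only [Pi.smul_apply, smul_eq_mul, mul_pow, integral_const_mul]
    field_simp
  have hint : ∫ p, h p * (-c - ε • h) p ∂(P.prod Q) =
      -∫ p, h p * c p ∂(P.prod Q) - ε * ∫ p, h p ^ 2 ∂(P.prod Q) := by
    simp only [Pi.sub_apply, Pi.neg_apply, Pi.smul_apply, smul_eq_mul, mul_sub, mul_neg,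
      mul_left_comm (h _) ε, ← sq]
    rw [integral_sub (f := fun p => -(h p * c p)) (hsup.1.integrable_mul hc).neg
      (hsup.1.integrable_sq.const_mul ε), integral_neg, integral_const_mul]
  rw [hval, hint] at key
  rw [densityCost]
  linarith

variable [IsFiniteMeasure P] [IsFiniteMeasure Q]

lemma memLp_fst_add_snd_sub {f : X → ℝ} {g : Y → ℝ} (hc : MemLp c 2 (P.prod Q))
    (hf : MemLp f 2 P) (hg : MemLp g 2 Q) : MemLp (fun p => f p.1 + g p.2 - c p) 2 (P.prod Q) :=
  ((hf.comp_fst Q).add (hg.comp_snd P)).sub hc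

lemma IsCouplingDensity.dualObjective_le {h : X × Y → ℝ} (hh : IsCouplingDensity P Q h)
    (hε : 0 < ε) (hc : MemLp c 2 (P.prod Q)) {f : X → ℝ} {g : Y → ℝ} (hf : MemLp f 2 P)
    (hg : MemLp g 2 Q) : dualObjective ε P Q c f g ≤ densityCost ε (P.prod Q) c h := by
  have hint : ∀ {k : X × Y → ℝ}, MemLp k 2 (P.prod Q) →
      Integrable (fun p => h p * k p) (P.prod Q) := fun hk => hh.memLp.integrable_mul hk
  have hw := memLp_fst_add_snd_sub hc hf hg
  have hsum : ∫ x, f x ∂P + ∫ y, g y ∂Q =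
      ∫ p, h p * (f p.1 + g p.2 - c p) ∂(P.prod Q) + ∫ p, h p * c p ∂(P.prod Q) := by
    rw [← hh.integral_mul_fst f hf, ← hh.integral_mul_snd g hg,
      ← integral_add (hint (hf.comp_fst Q)) (hint (hg.comp_snd P)),
      ← integral_add (hint hw) (hint hc)]
    congr 1
    funext p
    ring
  have := integral_mul_sub_quadraticPenalty_le hε hh.memLp hh.nonneg hw
  rw [dualObjective, densityCost, hsum]
  linarith

lemma concaveOn_dualObjective (hε : 0 ≤ ε) :
    ConcaveOn ℝ ({c | MemLp c 2 (P.prod Q)} ×ˢ {f | MemLp f 2 P} ×ˢ {g | MemLp g 2 Q})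
      (fun q => dualObjective ε P Q q.1 q.2.1 q.2.2) := by
  refine ⟨(convex_setOf_memLp 2).prod ((convex_setOf_memLp 2).prod (convex_setOf_memLp 2)), ?_⟩
  rintro ⟨c₁, f₁, g₁⟩ ⟨hc₁ : MemLp c₁ 2 _, hf₁ : MemLp f₁ 2 P, hg₁ : MemLp g₁ 2 Q⟩
    ⟨c₂, f₂, g₂⟩ ⟨hc₂ : MemLp c₂ 2 _, hf₂ : MemLp f₂ 2 P, hg₂ : MemLp g₂ 2 Q⟩ a b ha hb hab
  have hpen := (convexOn_quadraticPenalty hε).2 (memLp_fst_add_snd_sub hc₁ hf₁ hg₁)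
    (memLp_fst_add_snd_sub hc₂ hf₂ hg₂) ha hb hab
  have hw : (fun p => (a • f₁ + b • f₂) p.1 + (a • g₁ + b • g₂) p.2 - (a • c₁ + b • c₂) p) =
      a • (fun p => f₁ p.1 + g₁ p.2 - c₁ p) + b • (fun p => f₂ p.1 + g₂ p.2 - c₂ p) := by
    funext p
    simp only [Pi.add_apply, Pi.smul_apply, smul_eq_mul]
    ring
  simp only [Prod.smul_mk, Prod.mk_add_mk, dualObjective, smul_eq_mul] at hpen ⊢
  rw [hw]
  simp only [Pi.add_apply, Pi.smul_apply, smul_eq_mul]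
  rw [integral_add ((hf₁.integrable one_le_two).const_mul a)
      ((hf₂.integrable one_le_two).const_mul b),
    integral_add ((hg₁.integrable one_le_two).const_mul a)
      ((hg₂.integrable one_le_two).const_mul b),
    integral_const_mul, integral_const_mul, integral_const_mul, integral_const_mul]
  linarith

lemma convex_dualHypograph (hε : 0 ≤ ε) (hc : MemLp c 2 (P.prod Q)) :
    Convex ℝ (dualHypograph ε P Q c) := by
  rintro ⟨u₁, t₁⟩ ⟨f₁, g₁, hf₁, hg₁, ht₁⟩ ⟨u₂, t₂⟩ ⟨f₂, g₂, hf₂, hg₂, ht₂⟩ a b ha hb hab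
  refine ⟨a • f₁ + b • f₂, a • g₁ + b • g₂, (hf₁.const_smul a).add (hf₂.const_smul b),
    (hg₁.const_smul a).add (hg₂.const_smul b), ?_⟩
  have hconc := (concaveOn_dualObjective hε).2 (x := (c + ⇑u₁, f₁, g₁)) (y := (c + ⇑u₂, f₂, g₂))
    ⟨hc.add (Lp.memLp u₁), hf₁, hg₁⟩ ⟨hc.add (Lp.memLp u₂), hf₂, hg₂⟩ ha hb hab
  have hcoe : a • (c + ⇑u₁) + b • (c + ⇑u₂) =ᵐ[P.prod Q] c + ⇑(a • u₁ + b • u₂) := by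
    filter_upwards [Lp.coeFn_add (a • u₁) (b • u₂), Lp.coeFn_smul a u₁, Lp.coeFn_smul b u₂]
      with p h₁ h₂ h₃
    simp only [Pi.add_apply, Pi.smul_apply, h₁, h₂, h₃, smul_eq_mul]
    linear_combination hab * c p
  have hlt := convex_Iio (0 : ℝ) (sub_neg.2 ht₁) (sub_neg.2 ht₂) ha hb hab
  simp only [Prod.smul_mk, Prod.mk_add_mk, smul_eq_mul, mem_Iio] at hconc hlt ⊢
  rw [← dualObjective_congr_ae hcoe]
  linarith

theorem exists_isDualSupergradient (hε : 0 < ε) (hc : MemLp c 2 (P.prod Q)) {D : ℝ}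
    (hD : ∀ f g, MemLp f 2 P → MemLp g 2 Q → dualObjective ε P Q c f g ≤ D) :
    ∃ h, IsDualSupergradient ε P Q c D h := by
  obtain ⟨φ, hφ⟩ := exists_le_add_of_ball_prod_Iio_subset (convex_dualHypograph hε.le hc)
    one_pos (ball_prod_Iio_subset_dualHypograph hε hc) (zero_mk_notMem_dualHypograph hD)
  obtain ⟨h, hh, hφh⟩ := exists_memLp_apply_toLp_eq_integral_mul φ
  refine ⟨h, hh, fun u f g hu hf hg => le_of_forall_lt_imp_le_of_dense fun t ht => ?_⟩
  have hcu : c + ⇑(hu.toLp u) =ᵐ[P.prod Q] c + u :=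
    hu.coeFn_toLp.mono fun p hp => by rw [Pi.add_apply, hp, Pi.add_apply]
  have hmem : (hu.toLp u, t) ∈ dualHypograph ε P Q c :=
    ⟨f, g, hf, hg, by rwa [dualObjective_congr_ae hcu]⟩
  simpa only [hφh] using hφ _ hmem

namespace IsDualSupergradient

variable {D : ℝ} {h : X × Y → ℝ}

lemma ae_nonneg (hsup : IsDualSupergradient ε P Q c D h) (hc : MemLp c 2 (P.prod Q)) :
    0 ≤ᵐ[P.prod Q] h := by
  refine ae_nonneg_of_forall_setIntegral_nonneg (hsup.1.integrable one_le_two) fun s hs _ => ?_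
  suffices ∀ t, 0 ≤ t → t * -∫ p in s, h p ∂(P.prod Q) ≤ D - ∫ p, h p * c p ∂(P.prod Q) by
    linarith [nonpos_of_forall_nonneg_mul_le this]
  intro t ht
  -- At the nonnegative cost `t 1_s` the dual objective at `(0, 0)` vanishes.
  have hind : MemLp (s.indicator fun _ => t) 2 (P.prod Q) :=
    memLp_indicator_const 2 hs t (Or.inr (measure_ne_top _ _))
  have key := hsup.2 _ 0 0 (hc.neg.add hind) .zero .zero
  have hzero : dualObjective ε P Q (c + (-c + s.indicator fun _ => t)) 0 0 = 0 := by
    rw [dualObjective_zero_zero, quadraticPenalty_eq_zero_of_nonpos, neg_zero]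
    refine ae_of_all _ fun p => ?_
    simpa using Set.indicator_nonneg (fun _ _ => ht) p
  have hint : ∫ p, h p * (-c + s.indicator fun _ => t) p ∂(P.prod Q) =
      -∫ p, h p * c p ∂(P.prod Q) + (∫ p in s, h p ∂(P.prod Q)) * t := by
    simp only [Pi.add_apply, Pi.neg_apply, mul_add, mul_neg, ← Set.indicator_mul_right]
    rw [integral_add (f := fun p => -(h p * c p)) (hsup.1.integrable_mul hc).neg
      (((hsup.1.integrable one_le_two).mul_const t).indicator hs), integral_neg,
      integral_indicator hs, integral_mul_const]
  rw [hzero, hint] at key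
  linarith

lemma integral_mul_add_eq (hsup : IsDualSupergradient ε P Q c D h) {f : X → ℝ} {g : Y → ℝ}
    (hf : MemLp f 2 P) (hg : MemLp g 2 Q) :
    ∫ p, h p * (f p.1 + g p.2) ∂(P.prod Q) = ∫ x, f x ∂P + ∫ y, g y ∂Q := by
  suffices ∀ t : ℝ, t * (∫ x, f x ∂P + ∫ y, g y ∂Q - ∫ p, h p * (f p.1 + g p.2) ∂(P.prod Q)) ≤
      D - dualObjective ε P Q c 0 0 by
    linarith [eq_zero_of_forall_mul_le this]
  intro t
  -- Shifting the cost and the potentials together by `t (f ⊕ g)` leaves `f ⊕ g - c` unchanged.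
  have key := hsup.2 (fun p => t * (f p.1 + g p.2)) (fun x => t * f x) (fun y => t * g y)
    (((hf.comp_fst Q).add (hg.comp_snd P)).const_mul t) (hf.const_mul t) (hg.const_mul t)
  have hshift : dualObjective ε P Q (c + fun p => t * (f p.1 + g p.2)) (fun x => t * f x)
      (fun y => t * g y) = t * (∫ x, f x ∂P + ∫ y, g y ∂Q) + dualObjective ε P Q c 0 0 := by
    have hw : (fun p => t * f p.1 + t * g p.2 - (c + fun p : X × Y => t * (f p.1 + g p.2)) p)
        = -c := by
      funext p
      simp only [Pi.add_apply, Pi.neg_apply]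
      ring
    rw [dualObjective_zero_zero, dualObjective, integral_const_mul, integral_const_mul, hw]
    ring
  simp only [hshift, mul_left_comm (h _) t, integral_const_mul] at key
  linarith

lemma isCouplingDensity (hsup : IsDualSupergradient ε P Q c D h) (hc : MemLp c 2 (P.prod Q)) :
    IsCouplingDensity P Q h where
  memLp := hsup.1
  nonneg := hsup.ae_nonneg hc
  integral_mul_fst f hf := by
    simpa using hsup.integral_mul_add_eq hf (MemLp.zero : MemLp (0 : Y → ℝ) 2 Q)
  integral_mul_snd g hg := by
    simpa using hsup.integral_mul_add_eq (MemLp.zero : MemLp (0 : X → ℝ) 2 P) hg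

end IsDualSupergradient

theorem exists_isCouplingDensity_densityCost_le (hε : 0 < ε) (hc : MemLp c 2 (P.prod Q))
    {D : ℝ} (hD : ∀ f g, MemLp f 2 P → MemLp g 2 Q → dualObjective ε P Q c f g ≤ D) :
    ∃ h, IsCouplingDensity P Q h ∧ densityCost ε (P.prod Q) c h ≤ D := by
  obtain ⟨h, hsup⟩ := exists_isDualSupergradient hε hc hD
  exact ⟨h, hsup.isCouplingDensity hc, hsup.densityCost_le hε hc (hsup.ae_nonneg hc)⟩

end Duality

section Densities

variable {Z W : Type*} [MeasurableSpace Z] [MeasurableSpace W] {ν : Measure Z} {φ : Z → W}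

lemma integral_rnDeriv_mul_comp {π : Measure Z} [π.HaveLebesgueDecomposition ν] [SigmaFinite π]
    (hπ : π ≪ ν) (hφ : Measurable φ) {f : W → ℝ} (hf : AEStronglyMeasurable f (π.map φ)) :
    ∫ z, (π.rnDeriv ν z).toReal * f (φ z) ∂ν = ∫ w, f w ∂(π.map φ) := by
  rw [integral_map hφ.aemeasurable hf]
  exact integral_rnDeriv_smul hπ

lemma map_withDensity_ofReal_eq (hφ : Measurable φ) {h : Z → ℝ} (hh : Integrable h ν)
    (h0 : 0 ≤ᵐ[ν] h) {P : Measure W} [IsFiniteMeasure P]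
    (H : ∀ s, MeasurableSet s → ∫ z, h z * s.indicator 1 (φ z) ∂ν = P.real s) :
    (ν.withDensity fun z => ENNReal.ofReal (h z)).map φ = P := by
  ext s hs
  have hind : ∫ z, h z * s.indicator 1 (φ z) ∂ν = ∫ z in φ ⁻¹' s, h z ∂ν := by
    rw [← integral_indicator (hφ hs)]
    congr 1
    funext z
    by_cases hz : φ z ∈ s <;> simp [hz]
  rw [Measure.map_apply hφ hs, withDensity_apply _ (hφ hs),
    ← ofReal_integral_eq_lintegral_ofReal hh.restrict (ae_restrict_of_ae h0), ← hind, H s hs,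
    measureReal_def, ENNReal.ofReal_toReal (measure_ne_top P s)]

lemma toReal_rnDeriv_withDensity_ofReal [SigmaFinite ν] {h : Z → ℝ} (hh : AEMeasurable h ν)
    (h0 : 0 ≤ᵐ[ν] h) :
    (fun z => ((ν.withDensity fun z => ENNReal.ofReal (h z)).rnDeriv ν z).toReal) =ᵐ[ν] h := by
  filter_upwards [Measure.rnDeriv_withDensity₀ ν hh.ennreal_ofReal, h0] with z hz hz0
  rw [hz, ENNReal.toReal_ofReal hz0]

end Densities

section Euclidean

variable {d : ℕ} {ε : ℝ} {P Q : Measure (EuclideanSpace ℝ (Fin d))}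
  [IsProbabilityMeasure P] [IsProbabilityMeasure Q]
  {c : EuclideanSpace ℝ (Fin d) → EuclideanSpace ℝ (Fin d) → ℝ}
  {π : Measure (EuclideanSpace ℝ (Fin d) × EuclideanSpace ℝ (Fin d))}
  {h : EuclideanSpace ℝ (Fin d) × EuclideanSpace ℝ (Fin d) → ℝ}

lemma Gamma_eq_dualObjective (hc : MemLp (Function.uncurry c) 2 (P.prod Q))
    {f g : EuclideanSpace ℝ (Fin d) → ℝ} (hf : MemLp f 2 P) (hg : MemLp g 2 Q) :
    Gamma ε P Q c f g = dualObjective ε P Q (Function.uncurry c) f g := by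
  have hfg : MemLp (fun p : _ × _ => f p.1 + g p.2) 2 (P.prod Q) :=
    (hf.comp_fst Q).add (hg.comp_snd P)
  rw [Gamma, integral_sub (hfg.integrable one_le_two)
      (g := fun p => 1 / (2 * ε) * max (f p.1 + g p.2 - c p.1 p.2) 0 ^ 2)
      ((integrable_max_zero_sq (hfg.sub hc)).const_mul _),
    integral_add ((hf.comp_fst Q).integrable one_le_two) ((hg.comp_snd P).integrable one_le_two),
    integral_fun_fst, integral_fun_snd, integral_const_mul]
  simp [dualObjective, quadraticPenalty, Function.uncurry]

lemma primalCost_eq_densityCost [SigmaFinite π] (hπ : π ≪ P.prod Q) :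
    primalCost ε P Q c π = densityCost ε (P.prod Q) (Function.uncurry c)
      (fun p => (π.rnDeriv (P.prod Q) p).toReal) := by
  rw [primalCost, densityCost, ← integral_rnDeriv_smul hπ]
  rfl

lemma IsFeasible.isCouplingDensity (hπ : IsFeasible P Q π) :
    IsCouplingDensity P Q (fun p => (π.rnDeriv (P.prod Q) p).toReal) := by
  obtain ⟨hprob, hfst, hsnd, hac, hL2⟩ := hπ
  refine ⟨hL2, ae_of_all _ fun _ => ENNReal.toReal_nonneg, fun f hf => ?_, fun g hg => ?_⟩
  · rw [integral_rnDeriv_mul_comp hac measurable_fst ((show π.map Prod.fst = P from hfst) ▸ hf.1)]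
    exact congrArg (fun μ => ∫ x, f x ∂μ) hfst
  · rw [integral_rnDeriv_mul_comp hac measurable_snd ((show π.map Prod.snd = Q from hsnd) ▸ hg.1)]
    exact congrArg (fun μ => ∫ y, g y ∂μ) hsnd

lemma IsCouplingDensity.isFeasible_withDensity (hh : IsCouplingDensity P Q h) :
    IsFeasible P Q ((P.prod Q).withDensity fun p => ENNReal.ofReal (h p)) := by
  have hint := hh.memLp.integrable one_le_two
  have hind : ∀ {μ : Measure (EuclideanSpace ℝ (Fin d))} [IsFiniteMeasure μ] {s},
      MeasurableSet s → MemLp (s.indicator (1 : EuclideanSpace ℝ (Fin d) → ℝ)) 2 μ :=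
    fun hs => memLp_indicator_const 2 hs (1 : ℝ) (Or.inr (measure_ne_top _ _))
  have hfst : ((P.prod Q).withDensity fun p => ENNReal.ofReal (h p)).fst = P :=
    map_withDensity_ofReal_eq measurable_fst hint hh.nonneg fun s hs => by
      rw [hh.integral_mul_fst _ (hind hs), integral_indicator_one hs]
  have hsnd : ((P.prod Q).withDensity fun p => ENNReal.ofReal (h p)).snd = Q :=
    map_withDensity_ofReal_eq measurable_snd hint hh.nonneg fun s hs => by
      rw [hh.integral_mul_snd _ (hind hs), integral_indicator_one hs]
  refine ⟨⟨by rw [← Measure.fst_univ, hfst, measure_univ]⟩, hfst, hsnd,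
    withDensity_absolutelyContinuous _ _, hh.memLp.ae_eq ?_⟩
  exact (toReal_rnDeriv_withDensity_ofReal hint.aemeasurable hh.nonneg).symm

lemma IsCouplingDensity.primalCost_withDensity (hh : IsCouplingDensity P Q h) :
    primalCost ε P Q c ((P.prod Q).withDensity fun p => ENNReal.ofReal (h p)) =
      densityCost ε (P.prod Q) (Function.uncurry c) h := by
  have := hh.isFeasible_withDensity.1
  rw [primalCost_eq_densityCost (withDensity_absolutelyContinuous _ _), densityCost_congr_ae
    (toReal_rnDeriv_withDensity_ofReal (hh.memLp.integrable one_le_two).aemeasurable hh.nonneg)]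

lemma Gamma_le_primalCost (hε : 0 < ε) (hc : MemLp (Function.uncurry c) 2 (P.prod Q))
    (hπ : IsFeasible P Q π) {f g : EuclideanSpace ℝ (Fin d) → ℝ} (hf : MemLp f 2 P)
    (hg : MemLp g 2 Q) : Gamma ε P Q c f g ≤ primalCost ε P Q c π := by
  have := hπ.1
  rw [Gamma_eq_dualObjective hc hf hg, primalCost_eq_densityCost hπ.2.2.2.1]
  exact hπ.isCouplingDensity.dualObjective_le hε hc hf hg

end Euclidean

theorem strong_duality_QOT_general
    (d : ℕ) (ε : ℝ) (hε : 0 < ε)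
    (Ω Ω' : Set (EuclideanSpace ℝ (Fin d)))
    (hΩc : IsCompact Ω)
    (hΩ'c : IsCompact Ω')
    (P Q : Measure (EuclideanSpace ℝ (Fin d)))
    [IsProbabilityMeasure P] [IsProbabilityMeasure Q]
    (ρ : EuclideanSpace ℝ (Fin d) → ℝ)
    (hPdef : P = (volume.restrict Ω).withDensity fun x => ENNReal.ofReal (ρ x))
    (hQsupp : Q Ω'ᶜ = 0)
    (c : EuclideanSpace ℝ (Fin d) → EuclideanSpace ℝ (Fin d) → ℝ)
    (L : ℝ)
    (hc : LipschitzWith (Real.toNNReal L) (Function.uncurry c)) :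
    sInf {v : ℝ | ∃ π, IsFeasible P Q π ∧ v = primalCost ε P Q c π} =
      sSup {v : ℝ | ∃ f g : EuclideanSpace ℝ (Fin d) → ℝ,
        MemLp f 2 P ∧ MemLp g 2 Q ∧ v = Gamma ε P Q c f g} := by
  have hP : ∀ᵐ x ∂P, x ∈ Ω :=
    hPdef ▸ (withDensity_absolutelyContinuous _ _).ae_le (ae_restrict_mem hΩc.measurableSet)
  have hQ : ∀ᵐ y ∂Q, y ∈ Ω' := mem_ae_iff.2 hQsupp
  have hcL2 : MemLp (Function.uncurry c) 2 (P.prod Q) :=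
    hc.continuous.memLp_of_ae_mem_isCompact (hΩc.prod hΩ'c)
      ((Measure.quasiMeasurePreserving_fst.ae hP).and (Measure.quasiMeasurePreserving_snd.ae hQ)) 2
  have weak {π} (hπ : IsFeasible P Q π) {f g} (hf : MemLp f 2 P) (hg : MemLp g 2 Q) :=
    Gamma_le_primalCost (c := c) hε hcL2 hπ hf hg
  obtain ⟨π₁, hπ₁⟩ : ∃ π, IsFeasible P Q π := ⟨_, isCouplingDensity_one.isFeasible_withDensity⟩
  set primal := {v : ℝ | ∃ π, IsFeasible P Q π ∧ v = primalCost ε P Q c π}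
  set dual := {v : ℝ | ∃ f g : EuclideanSpace ℝ (Fin d) → ℝ,
    MemLp f 2 P ∧ MemLp g 2 Q ∧ v = Gamma ε P Q c f g}
  have hdual : BddAbove dual := ⟨primalCost ε P Q c π₁, by
    rintro _ ⟨f, g, hf, hg, rfl⟩
    exact weak hπ₁ hf hg⟩
  have hprimal : BddBelow primal := ⟨Gamma ε P Q c 0 0, by
    rintro _ ⟨π, hπ, rfl⟩
    exact weak hπ .zero .zero⟩
  obtain ⟨h, hh, hcost⟩ := exists_isCouplingDensity_densityCost_le hε hcL2 fun f g hf hg =>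
    Gamma_eq_dualObjective hcL2 hf hg ▸ le_csSup hdual ⟨f, g, hf, hg, rfl⟩
  refine le_antisymm ?_ (csSup_le ⟨_, 0, 0, .zero, .zero, rfl⟩ ?_)
  · calc sInf primal ≤ primalCost ε P Q c _ := csInf_le hprimal ⟨_, hh.isFeasible_withDensity, rfl⟩
      _ = densityCost ε (P.prod Q) (Function.uncurry c) h := hh.primalCost_withDensity
      _ ≤ sSup dual := hcost
  · rintro _ ⟨f, g, hf, hg, rfl⟩
    refine le_csInf ⟨_, π₁, hπ₁, rfl⟩ ?_
    rintro _ ⟨π, hπ, rfl⟩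
    exact weak hπ hf hg

/-- Strong duality for quadratically regularized optimal transport:
`QOT_ε(P,Q) = sup_{(f,g) ∈ L²(P) × L²(Q)} Γ(f,g)`. -/
theorem strong_duality_QOT
    (d : ℕ) (hd : 1 ≤ d) (ε : ℝ) (hε : 0 < ε)
    (Ω Ω' : Set (EuclideanSpace ℝ (Fin d)))
    (hΩc : IsCompact Ω) (hΩconv : Convex ℝ Ω) (hΩne : Ω.Nonempty)
    (hΩ'c : IsCompact Ω') (hΩ'ne : Ω'.Nonempty)
    (P Q : Measure (EuclideanSpace ℝ (Fin d)))
    [IsProbabilityMeasure P] [IsProbabilityMeasure Q]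
    (ρ : EuclideanSpace ℝ (Fin d) → ℝ) (hρm : Measurable ρ)
    (lamP LamP : ℝ) (hlam : 0 < lamP)
    (hPdef : P = (volume.restrict Ω).withDensity fun x => ENNReal.ofReal (ρ x))
    (hρlb : ∀ x ∈ Ω, lamP ≤ ρ x) (hρub : ∀ x ∈ Ω, ρ x ≤ LamP)
    (hQsupp : Q Ω'ᶜ = 0)
    (c : EuclideanSpace ℝ (Fin d) → EuclideanSpace ℝ (Fin d) → ℝ)
    (L : ℝ) (hL : 0 < L)
    (hc : LipschitzWith (Real.toNNReal L) (Function.uncurry c)) :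
    sInf {v : ℝ | ∃ π, IsFeasible P Q π ∧ v = primalCost ε P Q c π} =
      sSup {v : ℝ | ∃ f g : EuclideanSpace ℝ (Fin d) → ℝ,
        MemLp f 2 P ∧ MemLp g 2 Q ∧ v = Gamma ε P Q c f g} :=
  strong_duality_QOT_general d ε hε Ω Ω' hΩc hΩ'c P Q ρ hPdef hQsupp c L hc
end

section
/- Explicit projection onto the space of direct sums: for every h ∈ L²(P⊗Q), define h_P(x) := ∫ h(x,y) dQ(y), h_Q(y) := ∫ h(x,y) dP(x), and h̄ := ∫ h d(P⊗Q). Then the function (x,y) ↦ h_P(x) + h_Q(y) − h̄ belongs to H, and h − (h_P ⊕ h_Q − h̄) is orthogonal in L²(P⊗Q) to every element of H; that is, h_P ⊕ h_Q − h̄ is the orthogonal projection of h onto H. -/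
/-!
The residual `w := h - (h_P ⊕ h_Q - h̄)` has vanishing slice integrals: `∫ w(x, ·) dQ = 0` for
`P`-a.e. `x` and `∫ w(·, y) dP = 0` for `Q`-a.e. `y`. Integrating `w · (u ∘ fst)` first in `y`
(Fubini) therefore gives `0`, and likewise for `w · (v ∘ snd)`. That `h_P ⊕ h_Q - h̄` lies in `H`
is Jensen's inequality `‖∫ h(x, ·) dQ‖ᵖ ≤ ∫ ‖h(x, ·)‖ᵖ dQ`, integrated in `x` by Tonelli.
-/

open scoped ENNReal

namespace MeasureTheory

variable {α β E : Type*} [MeasurableSpace α] [MeasurableSpace β] {μ : Measure α} {ν : Measure β}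
  [NormedAddCommGroup E] [NormedSpace ℝ E]

theorem enorm_integral_le_eLpNorm [IsProbabilityMeasure μ] {f : α → E} {p : ℝ≥0∞} (hp : 1 ≤ p)
    (hf : AEStronglyMeasurable f μ) : ‖∫ x, f x ∂μ‖ₑ ≤ eLpNorm f p μ :=
  calc ‖∫ x, f x ∂μ‖ₑ ≤ ∫⁻ x, ‖f x‖ₑ ∂μ := enorm_integral_le_lintegral_enorm f
    _ = eLpNorm f 1 μ := eLpNorm_one_eq_lintegral_enorm.symm
    _ ≤ eLpNorm f p μ := eLpNorm_le_eLpNorm_of_exponent_le hp hf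

theorem enorm_integral_rpow_le_lintegral [IsProbabilityMeasure μ] {f : α → E} {p : ℝ≥0∞}
    (hp : 1 ≤ p) (hp' : p ≠ ∞) (hf : AEStronglyMeasurable f μ) :
    ‖∫ x, f x ∂μ‖ₑ ^ p.toReal ≤ ∫⁻ x, ‖f x‖ₑ ^ p.toReal ∂μ := by
  have hp₀ : 0 < p.toReal := ENNReal.toReal_pos (by positivity) hp'
  calc ‖∫ x, f x ∂μ‖ₑ ^ p.toReal ≤ eLpNorm f p μ ^ p.toReal :=
        ENNReal.rpow_le_rpow (enorm_integral_le_eLpNorm hp hf) hp₀.le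
    _ = ∫⁻ x, ‖f x‖ₑ ^ p.toReal ∂μ := by
        rw [eLpNorm_eq_lintegral_rpow_enorm_toReal (by positivity) hp', ← ENNReal.rpow_mul,
          one_div_mul_cancel hp₀.ne', ENNReal.rpow_one]

theorem eLpNorm_integral_prod_left_le [SFinite μ] [IsProbabilityMeasure ν] {f : α × β → E}
    {p : ℝ≥0∞} (hp : 1 ≤ p) (hp' : p ≠ ∞) (hf : AEStronglyMeasurable f (μ.prod ν)) :
    eLpNorm (fun x => ∫ y, f (x, y) ∂ν) p μ ≤ eLpNorm f p (μ.prod ν) := by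
  have hp₀ : p ≠ 0 := by positivity
  rw [eLpNorm_eq_lintegral_rpow_enorm_toReal hp₀ hp',
    eLpNorm_eq_lintegral_rpow_enorm_toReal hp₀ hp', lintegral_prod _ (hf.enorm.pow_const _)]
  gcongr ?_ ^ _
  refine lintegral_mono_ae ?_
  filter_upwards [hf.prodMk_left] with x hx
  exact enorm_integral_rpow_le_lintegral hp hp' hx

theorem MemLp.integral_prod_left [SFinite μ] [IsProbabilityMeasure ν] {f : α × β → E}
    {p : ℝ≥0∞} (hp : 1 ≤ p) (hp' : p ≠ ∞) (hf : MemLp f p (μ.prod ν)) :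
    MemLp (fun x => ∫ y, f (x, y) ∂ν) p μ :=
  ⟨hf.1.integral_prod_right', (eLpNorm_integral_prod_left_le hp hp' hf.1).trans_lt hf.2⟩

theorem MemLp.integral_prod_right [IsProbabilityMeasure μ] [SFinite ν] {f : α × β → E}
    {p : ℝ≥0∞} (hp : 1 ≤ p) (hp' : p ≠ ∞) (hf : MemLp f p (μ.prod ν)) :
    MemLp (fun y => ∫ x, f (x, y) ∂μ) p ν :=
  (hf.comp_measurePreserving Measure.measurePreserving_swap).integral_prod_left hp hp'

theorem integral_mul_comp_fst_eq_zero [SFinite μ] [SFinite ν] {w : α × β → ℝ} {u : α → ℝ}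
    (hwu : Integrable (fun z => w z * u z.1) (μ.prod ν))
    (hw : ∀ᵐ x ∂μ, ∫ y, w (x, y) ∂ν = 0) : ∫ z, w z * u z.1 ∂(μ.prod ν) = 0 := by
  rw [integral_prod _ hwu]
  refine integral_eq_zero_of_ae ?_
  filter_upwards [hw] with x hx
  simp only [integral_mul_const, hx, zero_mul, Pi.zero_apply]

theorem integral_mul_comp_snd_eq_zero [SFinite μ] [SFinite ν] {w : α × β → ℝ} {v : β → ℝ}
    (hwv : Integrable (fun z => w z * v z.2) (μ.prod ν))
    (hw : ∀ᵐ y ∂ν, ∫ x, w (x, y) ∂μ = 0) : ∫ z, w z * v z.2 ∂(μ.prod ν) = 0 := by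
  rw [integral_prod_symm _ hwv]
  refine integral_eq_zero_of_ae ?_
  filter_upwards [hw] with y hy
  simp only [integral_mul_const, hy, zero_mul, Pi.zero_apply]

variable (μ ν) in
noncomputable def directSumProjection (h : α × β → ℝ) (z : α × β) : ℝ :=
  (∫ y, h (z.1, y) ∂ν) + (∫ x, h (x, z.2) ∂μ) - ∫ z, h z ∂(μ.prod ν)

section directSumProjection

variable [IsProbabilityMeasure μ] [IsProbabilityMeasure ν] {h : α × β → ℝ}

theorem MemLp.directSumProjection (hh : MemLp h 2 (μ.prod ν)) :
    MemLp (directSumProjection μ ν h) 2 (μ.prod ν) :=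
  (((hh.integral_prod_left one_le_two (by simp)).comp_fst ν).add
    ((hh.integral_prod_right one_le_two (by simp)).comp_snd μ)).sub (memLp_const _)

theorem ae_integral_sub_directSumProjection_left_eq_zero (hh : Integrable h (μ.prod ν)) :
    ∀ᵐ x ∂μ, ∫ y, (h (x, y) - directSumProjection μ ν h (x, y)) ∂ν = 0 := by
  filter_upwards [hh.prod_right_ae] with x hx
  have hmean : ∫ y, ∫ x, h (x, y) ∂μ ∂ν = ∫ z, h z ∂(μ.prod ν) := (integral_prod_symm h hh).symm
  have hint := hh.integral_prod_right
  simp only [directSumProjection]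
  rw [integral_sub hx (by fun_prop), integral_sub (by fun_prop) (integrable_const _),
    integral_add (integrable_const _) hint, integral_const, integral_const, hmean]
  simp

theorem ae_integral_sub_directSumProjection_right_eq_zero (hh : Integrable h (μ.prod ν)) :
    ∀ᵐ y ∂ν, ∫ x, (h (x, y) - directSumProjection μ ν h (x, y)) ∂μ = 0 := by
  filter_upwards [hh.prod_left_ae] with y hy
  have hmean : ∫ x, ∫ y, h (x, y) ∂ν ∂μ = ∫ z, h z ∂(μ.prod ν) := (integral_prod h hh).symm
  have hint := hh.integral_prod_left
  simp only [directSumProjection]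
  rw [integral_sub hy (by fun_prop), integral_sub (by fun_prop) (integrable_const _),
    integral_add hint (integrable_const _), integral_const, integral_const, hmean]
  simp

theorem integral_sub_directSumProjection_mul_add_eq_zero (hh : MemLp h 2 (μ.prod ν))
    {u : α → ℝ} {v : β → ℝ} (hu : MemLp u 2 μ) (hv : MemLp v 2 ν) :
    ∫ z, (h z - directSumProjection μ ν h z) * (u z.1 + v z.2) ∂(μ.prod ν) = 0 := by
  have hw := hh.sub hh.directSumProjection
  have hwu : Integrable (fun z => (h z - directSumProjection μ ν h z) * u z.1) (μ.prod ν) :=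
    hw.integrable_mul (hu.comp_fst ν)
  have hwv : Integrable (fun z => (h z - directSumProjection μ ν h z) * v z.2) (μ.prod ν) :=
    hw.integrable_mul (hv.comp_snd μ)
  have hint := hh.integrable one_le_two
  simp_rw [mul_add]
  rw [integral_add hwu hwv,
    integral_mul_comp_fst_eq_zero hwu (ae_integral_sub_directSumProjection_left_eq_zero hint),
    integral_mul_comp_snd_eq_zero hwv (ae_integral_sub_directSumProjection_right_eq_zero hint),
    add_zero]

end directSumProjection

end MeasureTheory

open MeasureTheory

theorem projection_onto_direct_sums_general
    (d : ℕ)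
    (P Q : Measure (EuclideanSpace ℝ (Fin d)))
    [IsProbabilityMeasure P] [IsProbabilityMeasure Q]
    (h : EuclideanSpace ℝ (Fin d) × EuclideanSpace ℝ (Fin d) → ℝ)
    (hL2 : MemLp h 2 (P.prod Q)) :
    -- h_P ⊕ h_Q - h̄ belongs to H
    (∃ u v : EuclideanSpace ℝ (Fin d) → ℝ, MemLp u 2 P ∧ MemLp v 2 Q ∧
      (∀ᵐ p ∂(P.prod Q),
        (∫ y, h (p.1, y) ∂Q) + (∫ x, h (x, p.2) ∂P) - (∫ q, h q ∂(P.prod Q)) =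
          u p.1 + v p.2)) ∧
    -- h - (h_P ⊕ h_Q - h̄) is orthogonal to every element u ⊕ v of H
    (∀ u v : EuclideanSpace ℝ (Fin d) → ℝ, MemLp u 2 P → MemLp v 2 Q →
      ∫ p, (h p - ((∫ y, h (p.1, y) ∂Q) + (∫ x, h (x, p.2) ∂P) - (∫ q, h q ∂(P.prod Q)))) *
          (u p.1 + v p.2) ∂(P.prod Q) = 0) :=
  ⟨⟨fun x => (∫ y, h (x, y) ∂Q) - ∫ q, h q ∂(P.prod Q), fun y => ∫ x, h (x, y) ∂P,
      (hL2.integral_prod_left one_le_two (by simp)).sub (memLp_const _),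
      hL2.integral_prod_right one_le_two (by simp), ae_of_all _ fun _ => by ring⟩,
    fun _ _ hu hv => integral_sub_directSumProjection_mul_add_eq_zero hL2 hu hv⟩

/-- Explicit orthogonal projection onto the space of direct sums (Lemma 3.4, proof):
for `h ∈ L²(P ⊗ Q)`, the function `h_P ⊕ h_Q - h̄` lies in
`H = {u ⊕ v : u ∈ L²(P), v ∈ L²(Q)}` and `h - (h_P ⊕ h_Q - h̄)` is orthogonal to `H`;
hence `h_P ⊕ h_Q - h̄` is the orthogonal projection of `h` onto `H`. -/
theorem projection_onto_direct_sums
    (d : ℕ)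
    (Ω Ω' : Set (EuclideanSpace ℝ (Fin d)))
    (hΩc : IsCompact Ω) (hΩ'c : IsCompact Ω')
    (P Q : Measure (EuclideanSpace ℝ (Fin d)))
    [IsProbabilityMeasure P] [IsProbabilityMeasure Q]
    (hPsupp : P Ωᶜ = 0) (hQsupp : Q Ω'ᶜ = 0)
    (h : EuclideanSpace ℝ (Fin d) × EuclideanSpace ℝ (Fin d) → ℝ)
    (hmeas : Measurable h) (hL2 : MemLp h 2 (P.prod Q)) :
    -- h_P ⊕ h_Q - h̄ belongs to H
    (∃ u v : EuclideanSpace ℝ (Fin d) → ℝ, MemLp u 2 P ∧ MemLp v 2 Q ∧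
      (∀ᵐ p ∂(P.prod Q),
        (∫ y, h (p.1, y) ∂Q) + (∫ x, h (x, p.2) ∂P) - (∫ q, h q ∂(P.prod Q)) =
          u p.1 + v p.2)) ∧
    -- h - (h_P ⊕ h_Q - h̄) is orthogonal to every element u ⊕ v of H
    (∀ u v : EuclideanSpace ℝ (Fin d) → ℝ, MemLp u 2 P → MemLp v 2 Q →
      ∫ p, (h p - ((∫ y, h (p.1, y) ∂Q) + (∫ x, h (x, p.2) ∂P) - (∫ q, h q ∂(P.prod Q)))) *
          (u p.1 + v p.2) ∂(P.prod Q) = 0) :=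
  projection_onto_direct_sums_general d P Q h hL2
end

section
/- Lipschitz continuity of the dual gradient: for all (f,g), (u,v) ∈ L²(P) × L²(Q), ‖DΓ(f,g) − DΓ(u,v)‖_{L²(P)×L²(Q)} ≤ (2/ε)·‖(f−u, g−v)‖_{L²(P)×L²(Q)}. Moreover, for each fixed g the maps f ↦ D₁Γ(f,g) and f ↦ D₂Γ(f,g) are (1/ε)-Lipschitz from L²(P) to L²(P) and L²(Q) respectively, and for each fixed f the maps g ↦ D₁Γ(f,g) and g ↦ D₂Γ(f,g) are (1/ε)-Lipschitz from L²(Q) to L²(P) and L²(Q) respectively. -/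
open MeasureTheory Metric
open scoped ENNReal

/-- First gradient component `D₁Γ(f,g)(x) = 1 - (1/ε) ∫ (f(x)+g(y)-c(x,y))₊ dQ(y)`. -/
noncomputable def D1Gamma {d : ℕ} (ε : ℝ) (Q : Measure (EuclideanSpace ℝ (Fin d)))
    (c : EuclideanSpace ℝ (Fin d) → EuclideanSpace ℝ (Fin d) → ℝ)
    (f g : EuclideanSpace ℝ (Fin d) → ℝ) : EuclideanSpace ℝ (Fin d) → ℝ :=
  fun x => 1 - (1 / ε) * ∫ y, max (f x + g y - c x y) 0 ∂Q

/-- Second gradient component `D₂Γ(f,g)(y) = 1 - (1/ε) ∫ (f(x)+g(y)-c(x,y))₊ dP(x)`. -/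
noncomputable def D2Gamma {d : ℕ} (ε : ℝ) (P : Measure (EuclideanSpace ℝ (Fin d)))
    (c : EuclideanSpace ℝ (Fin d) → EuclideanSpace ℝ (Fin d) → ℝ)
    (f g : EuclideanSpace ℝ (Fin d) → ℝ) : EuclideanSpace ℝ (Fin d) → ℝ :=
  fun y => 1 - (1 / ε) * ∫ x, max (f x + g y - c x y) 0 ∂P

/-!
Truncation `t ↦ t₊` is 1-Lipschitz, so pointwise
`|D₁Γ(f,g)(x) - D₁Γ(u,v)(x)| ≤ ε⁻¹ (|f(x) - u(x)| + ‖g - v‖_{L¹(Q)})`. Minkowski's inequality and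
`‖·‖_{L¹} ≤ ‖·‖_{L²}` on a probability space turn this into
`‖D₁Γ(f,g) - D₁Γ(u,v)‖_{L²(P)} ≤ ε⁻¹ (‖f - u‖_{L²(P)} + ‖g - v‖_{L²(Q)})`, and `D₂Γ` is `D₁Γ`
with the roles of `P` and `Q` exchanged. Summing the squares of the two bounds and using
`(A + B)² ≤ 2 (A² + B²)` gives the constant `2/ε`; freezing one argument gives `1/ε`.
Compact supports and continuity of `c` make every truncated integrand integrable, so the Bochner
integrals in `D₁Γ`, `D₂Γ` never take their junk value.
-/

section L2

variable {α : Type*} [MeasurableSpace α] {μ : Measure α} [IsProbabilityMeasure μ]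

lemma integral_abs_le_sqrt_integral_sq {a : α → ℝ} (ha : MemLp a 2 μ) :
    ∫ x, |a x| ∂μ ≤ √(∫ x, a x ^ 2 ∂μ) := by
  have hvar := ProbabilityTheory.variance_nonneg |a| μ
  rw [ProbabilityTheory.variance_eq_sub ha.abs] at hvar
  simp only [Pi.pow_apply, Pi.abs_apply, sq_abs] at hvar
  exact Real.le_sqrt_of_sq_le (by linarith)

lemma sqrt_integral_sq_le_of_abs_le {h a : α → ℝ} {C c₀ : ℝ} (hC : 0 ≤ C) (hc₀ : 0 ≤ c₀)
    (ha : MemLp a 2 μ) (hbound : ∀ᵐ x ∂μ, |h x| ≤ C * |a x| + c₀) :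
    √(∫ x, h x ^ 2 ∂μ) ≤ C * √(∫ x, a x ^ 2 ∂μ) + c₀ := by
  set S := √(∫ x, a x ^ 2 ∂μ)
  have hS : S ^ 2 = ∫ x, a x ^ 2 ∂μ := Real.sq_sqrt (integral_nonneg fun x => sq_nonneg _)
  have hsq : Integrable (fun x => C ^ 2 * a x ^ 2) μ := ha.integrable_sq.const_mul _
  have habs : Integrable (fun x => 2 * C * c₀ * |a x|) μ :=
    (ha.integrable one_le_two).abs.const_mul _
  have hsum : Integrable (fun x => C ^ 2 * a x ^ 2 + 2 * C * c₀ * |a x|) μ := hsq.add habs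
  -- `h` need not be measurable: only the dominating side has to be integrable.
  have hmono : ∫ x, h x ^ 2 ∂μ ≤ ∫ x, (C ^ 2 * a x ^ 2 + 2 * C * c₀ * |a x| + c₀ ^ 2) ∂μ := by
    refine integral_mono_of_nonneg (.of_forall fun x => sq_nonneg _)
      (hsum.add (integrable_const _)) ?_
    filter_upwards [hbound] with x hx
    calc h x ^ 2 = |h x| ^ 2 := (sq_abs _).symm
      _ ≤ (C * |a x| + c₀) ^ 2 := pow_le_pow_left₀ (abs_nonneg _) hx 2
      _ = _ := by rw [← sq_abs (a x)]; ring
  rw [integral_add hsum (integrable_const _), integral_add hsq habs, integral_const_mul,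
    integral_const_mul, integral_const, probReal_univ, one_smul, ← hS] at hmono
  have hL1 := integral_abs_le_sqrt_integral_sq ha
  calc √(∫ x, h x ^ 2 ∂μ) ≤ √((C * S + c₀) ^ 2) := by
        refine Real.sqrt_le_sqrt (hmono.trans ?_)
        nlinarith [mul_le_mul_of_nonneg_left hL1 (by positivity : 0 ≤ 2 * C * c₀)]
    _ = C * S + c₀ := Real.sqrt_sq (by positivity)

end L2

lemma Continuous.integrable_of_isCompact_of_measure_compl_eq_zero {X : Type*}
    [TopologicalSpace X] [T2Space X] [MeasurableSpace X] [OpensMeasurableSpace X]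
    {μ : Measure X} [IsFiniteMeasure μ] {K : Set X} {φ : X → ℝ} (hφ : Continuous φ)
    (hK : IsCompact K) (hμK : μ Kᶜ = 0) : Integrable φ μ := by
  rw [← Measure.restrict_eq_self_of_ae_mem (s := K) hμK]
  exact hφ.continuousOn.integrableOn_compact hK

lemma abs_integral_max_zero_sub_le {β : Type*} [MeasurableSpace β] {ν : Measure β}
    {F G : β → ℝ} (hF : Integrable F ν) (hG : Integrable G ν) :
    |∫ y, max (F y) 0 ∂ν - ∫ y, max (G y) 0 ∂ν| ≤ ∫ y, |F y - G y| ∂ν := by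
  rw [← integral_sub hF.pos_part hG.pos_part]
  exact abs_integral_le_integral_abs.trans <|
    integral_mono (hF.pos_part.sub hG.pos_part).abs (hF.sub hG).abs
      fun y => abs_max_sub_max_le_abs _ _ _

lemma sqrt_add_le_of_sqrt_le {a b A B K : ℝ} (hA : 0 ≤ A) (hB : 0 ≤ B) (hK : 0 ≤ K)
    (haK : √a ≤ K * (√A + √B)) (hbK : √b ≤ K * (√A + √B)) :
    √(a + b) ≤ 2 * K * √(A + B) := by
  have hAB : (√A + √B) ^ 2 ≤ 2 * (A + B) := by
    nlinarith [sq_nonneg (√A - √B), Real.sq_sqrt hA, Real.sq_sqrt hB]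
  have ha := (Real.sqrt_le_iff.1 haK).2
  have hb := (Real.sqrt_le_iff.1 hbK).2
  refine Real.sqrt_le_iff.2 ⟨by positivity, ?_⟩
  rw [mul_pow, Real.sq_sqrt (add_nonneg hA hB)]
  nlinarith [mul_le_mul_of_nonneg_left hAB (sq_nonneg K)]

section DualGradient

variable {d : ℕ} {ε : ℝ} {P Q : Measure (EuclideanSpace ℝ (Fin d))}
  {c : EuclideanSpace ℝ (Fin d) → EuclideanSpace ℝ (Fin d) → ℝ}
  {f g u v : EuclideanSpace ℝ (Fin d) → ℝ}

lemma abs_D1Gamma_sub_le [IsProbabilityMeasure Q] (hε : 0 ≤ ε) (x : EuclideanSpace ℝ (Fin d))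
    (hc : Integrable (c x) Q) (hg : Integrable g Q) (hv : Integrable v Q) :
    |D1Gamma ε Q c f g x - D1Gamma ε Q c u v x| ≤
      1 / ε * |f x - u x| + 1 / ε * ∫ y, |g y - v y| ∂Q := by
  have hF : Integrable (fun y => f x + g y - c x y) Q := ((integrable_const _).add hg).sub hc
  have hG : Integrable (fun y => u x + v y - c x y) Q := ((integrable_const _).add hv).sub hc
  have hdiff : Integrable (fun y => |g y - v y|) Q := (hg.sub hv).abs
  calc |D1Gamma ε Q c f g x - D1Gamma ε Q c u v x|
      = 1 / ε * |∫ y, max (f x + g y - c x y) 0 ∂Q - ∫ y, max (u x + v y - c x y) 0 ∂Q| := by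
        rw [D1Gamma, D1Gamma, sub_sub_sub_cancel_left, ← mul_sub, abs_mul,
          abs_of_nonneg (one_div_nonneg.2 hε), abs_sub_comm]
    _ ≤ 1 / ε * ∫ y, (|f x - u x| + |g y - v y|) ∂Q := by
        gcongr
        refine (abs_integral_max_zero_sub_le hF hG).trans <|
          integral_mono (hF.sub hG).abs ((integrable_const _).add hdiff) fun y => ?_
        calc |f x + g y - c x y - (u x + v y - c x y)| = |(f x - u x) + (g y - v y)| := by ring_nf
          _ ≤ |f x - u x| + |g y - v y| := abs_add_le _ _
    _ = 1 / ε * |f x - u x| + 1 / ε * ∫ y, |g y - v y| ∂Q := by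
        rw [integral_add (integrable_const _) hdiff, integral_const, probReal_univ, one_smul,
          mul_add]

lemma sqrt_integral_sq_D1Gamma_sub_le [IsProbabilityMeasure P] [IsProbabilityMeasure Q]
    (hε : 0 ≤ ε) (hc : ∀ x, Integrable (c x) Q) (hf : MemLp f 2 P) (hg : MemLp g 2 Q)
    (hu : MemLp u 2 P) (hv : MemLp v 2 Q) :
    √(∫ x, (D1Gamma ε Q c f g x - D1Gamma ε Q c u v x) ^ 2 ∂P) ≤
      1 / ε * (√(∫ x, (f x - u x) ^ 2 ∂P) + √(∫ y, (g y - v y) ^ 2 ∂Q)) := by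
  have hε' : 0 ≤ 1 / ε := one_div_nonneg.2 hε
  calc √(∫ x, (D1Gamma ε Q c f g x - D1Gamma ε Q c u v x) ^ 2 ∂P)
      ≤ 1 / ε * √(∫ x, (f x - u x) ^ 2 ∂P) + 1 / ε * ∫ y, |g y - v y| ∂Q :=
        sqrt_integral_sq_le_of_abs_le hε' (by positivity) (hf.sub hu) <| .of_forall fun x =>
          abs_D1Gamma_sub_le hε x (hc x) (hg.integrable one_le_two) (hv.integrable one_le_two)
    _ ≤ 1 / ε * (√(∫ x, (f x - u x) ^ 2 ∂P) + √(∫ y, (g y - v y) ^ 2 ∂Q)) := by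
        rw [mul_add]
        gcongr
        exact integral_abs_le_sqrt_integral_sq (hg.sub hv)

lemma D2Gamma_eq_D1Gamma_flip : D2Gamma ε P c f g = D1Gamma ε P (flip c) g f := by
  ext y
  simp only [D2Gamma, D1Gamma, flip, add_comm (f _)]

lemma sqrt_integral_sq_D2Gamma_sub_le [IsProbabilityMeasure P] [IsProbabilityMeasure Q]
    (hε : 0 ≤ ε) (hc : ∀ y, Integrable (fun x => c x y) P) (hf : MemLp f 2 P) (hg : MemLp g 2 Q)
    (hu : MemLp u 2 P) (hv : MemLp v 2 Q) :
    √(∫ y, (D2Gamma ε P c f g y - D2Gamma ε P c u v y) ^ 2 ∂Q) ≤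
      1 / ε * (√(∫ x, (f x - u x) ^ 2 ∂P) + √(∫ y, (g y - v y) ^ 2 ∂Q)) := by
  rw [D2Gamma_eq_D1Gamma_flip, D2Gamma_eq_D1Gamma_flip, add_comm (√_)]
  exact sqrt_integral_sq_D1Gamma_sub_le hε hc hg hf hv hu

end DualGradient

theorem dual_gradient_lipschitz_general
    (d : ℕ) (ε : ℝ) (hε : 0 < ε)
    (Ω Ω' : Set (EuclideanSpace ℝ (Fin d)))
    (hΩc : IsCompact Ω) (hΩ'c : IsCompact Ω')
    (P Q : Measure (EuclideanSpace ℝ (Fin d)))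
    [IsProbabilityMeasure P] [IsProbabilityMeasure Q]
    (hPsupp : P Ωᶜ = 0) (hQsupp : Q Ω'ᶜ = 0)
    (c : EuclideanSpace ℝ (Fin d) → EuclideanSpace ℝ (Fin d) → ℝ)
    (L : ℝ)
    (hc : LipschitzWith (Real.toNNReal L) (Function.uncurry c)) :
    -- (2/ε)-Lipschitz continuity of the full gradient
    (∀ f g u v : EuclideanSpace ℝ (Fin d) → ℝ,
      MemLp f 2 P → MemLp g 2 Q → MemLp u 2 P → MemLp v 2 Q →
      Real.sqrt ((∫ x, (D1Gamma ε Q c f g x - D1Gamma ε Q c u v x) ^ 2 ∂P) +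
          ∫ y, (D2Gamma ε P c f g y - D2Gamma ε P c u v y) ^ 2 ∂Q) ≤
        (2 / ε) * Real.sqrt ((∫ x, (f x - u x) ^ 2 ∂P) + ∫ y, (g y - v y) ^ 2 ∂Q)) ∧
    -- (1/ε)-Lipschitz continuity of D₁Γ and D₂Γ in the first coordinate
    (∀ f u g : EuclideanSpace ℝ (Fin d) → ℝ,
      MemLp f 2 P → MemLp u 2 P → MemLp g 2 Q →
      Real.sqrt (∫ x, (D1Gamma ε Q c f g x - D1Gamma ε Q c u g x) ^ 2 ∂P) ≤
        (1 / ε) * Real.sqrt (∫ x, (f x - u x) ^ 2 ∂P) ∧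
      Real.sqrt (∫ y, (D2Gamma ε P c f g y - D2Gamma ε P c u g y) ^ 2 ∂Q) ≤
        (1 / ε) * Real.sqrt (∫ x, (f x - u x) ^ 2 ∂P)) ∧
    -- (1/ε)-Lipschitz continuity of D₁Γ and D₂Γ in the second coordinate
    (∀ f g v : EuclideanSpace ℝ (Fin d) → ℝ,
      MemLp f 2 P → MemLp g 2 Q → MemLp v 2 Q →
      Real.sqrt (∫ x, (D1Gamma ε Q c f g x - D1Gamma ε Q c f v x) ^ 2 ∂P) ≤
        (1 / ε) * Real.sqrt (∫ y, (g y - v y) ^ 2 ∂Q) ∧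
      Real.sqrt (∫ y, (D2Gamma ε P c f g y - D2Gamma ε P c f v y) ^ 2 ∂Q) ≤
        (1 / ε) * Real.sqrt (∫ y, (g y - v y) ^ 2 ∂Q)) := by
  have hcQ : ∀ x, Integrable (c x) Q := fun x =>
    (hc.continuous.uncurry_left x).integrable_of_isCompact_of_measure_compl_eq_zero hΩ'c hQsupp
  have hcP : ∀ y, Integrable (fun x => c x y) P := fun y =>
    (hc.continuous.uncurry_right y).integrable_of_isCompact_of_measure_compl_eq_zero hΩc hPsupp
  refine ⟨fun f g u v hf hg hu hv => ?_, fun f u g hf hu hg => ?_, fun f g v hf hg hv => ?_⟩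
  · rw [← mul_one_div 2 ε]
    exact sqrt_add_le_of_sqrt_le (integral_nonneg fun _ => sq_nonneg _)
      (integral_nonneg fun _ => sq_nonneg _) (one_div_nonneg.2 hε.le)
      (sqrt_integral_sq_D1Gamma_sub_le hε.le hcQ hf hg hu hv)
      (sqrt_integral_sq_D2Gamma_sub_le hε.le hcP hf hg hu hv)
  · simpa using And.intro (sqrt_integral_sq_D1Gamma_sub_le hε.le hcQ hf hg hu hg)
      (sqrt_integral_sq_D2Gamma_sub_le hε.le hcP hf hg hu hg)
  · simpa using And.intro (sqrt_integral_sq_D1Gamma_sub_le hε.le hcQ hf hg hf hv)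
      (sqrt_integral_sq_D2Gamma_sub_le hε.le hcP hf hg hf hv)

/-- Lipschitz continuity of the dual gradient (Lemma 4.1): `DΓ` is `(2/ε)`-Lipschitz on
`L²(P) × L²(Q)`, and each component is `(1/ε)`-Lipschitz in each coordinate. -/
theorem dual_gradient_lipschitz
    (d : ℕ) (hd : 1 ≤ d) (ε : ℝ) (hε : 0 < ε)
    (Ω Ω' : Set (EuclideanSpace ℝ (Fin d)))
    (hΩc : IsCompact Ω) (hΩ'c : IsCompact Ω')
    (P Q : Measure (EuclideanSpace ℝ (Fin d)))
    [IsProbabilityMeasure P] [IsProbabilityMeasure Q]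
    (hPsupp : P Ωᶜ = 0) (hQsupp : Q Ω'ᶜ = 0)
    (c : EuclideanSpace ℝ (Fin d) → EuclideanSpace ℝ (Fin d) → ℝ)
    (L : ℝ) (hL : 0 < L)
    (hc : LipschitzWith (Real.toNNReal L) (Function.uncurry c)) :
    -- (2/ε)-Lipschitz continuity of the full gradient
    (∀ f g u v : EuclideanSpace ℝ (Fin d) → ℝ,
      MemLp f 2 P → MemLp g 2 Q → MemLp u 2 P → MemLp v 2 Q →
      Real.sqrt ((∫ x, (D1Gamma ε Q c f g x - D1Gamma ε Q c u v x) ^ 2 ∂P) +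
          ∫ y, (D2Gamma ε P c f g y - D2Gamma ε P c u v y) ^ 2 ∂Q) ≤
        (2 / ε) * Real.sqrt ((∫ x, (f x - u x) ^ 2 ∂P) + ∫ y, (g y - v y) ^ 2 ∂Q)) ∧
    -- (1/ε)-Lipschitz continuity of D₁Γ and D₂Γ in the first coordinate
    (∀ f u g : EuclideanSpace ℝ (Fin d) → ℝ,
      MemLp f 2 P → MemLp u 2 P → MemLp g 2 Q →
      Real.sqrt (∫ x, (D1Gamma ε Q c f g x - D1Gamma ε Q c u g x) ^ 2 ∂P) ≤
        (1 / ε) * Real.sqrt (∫ x, (f x - u x) ^ 2 ∂P) ∧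
      Real.sqrt (∫ y, (D2Gamma ε P c f g y - D2Gamma ε P c u g y) ^ 2 ∂Q) ≤
        (1 / ε) * Real.sqrt (∫ x, (f x - u x) ^ 2 ∂P)) ∧
    -- (1/ε)-Lipschitz continuity of D₁Γ and D₂Γ in the second coordinate
    (∀ f g v : EuclideanSpace ℝ (Fin d) → ℝ,
      MemLp f 2 P → MemLp g 2 Q → MemLp v 2 Q →
      Real.sqrt (∫ x, (D1Gamma ε Q c f g x - D1Gamma ε Q c f v x) ^ 2 ∂P) ≤
        (1 / ε) * Real.sqrt (∫ y, (g y - v y) ^ 2 ∂Q) ∧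
      Real.sqrt (∫ y, (D2Gamma ε P c f g y - D2Gamma ε P c f v y) ^ 2 ∂Q) ≤
        (1 / ε) * Real.sqrt (∫ y, (g y - v y) ^ 2 ∂Q)) :=
  dual_gradient_lipschitz_general d ε hε Ω Ω' hΩc hΩ'c P Q hPsupp hQsupp c L hc
end

section
/- Sup norm of a direct sum: let Ω and Ω′ be nonempty sets and let f : Ω → ℝ and g : Ω′ → ℝ be bounded functions. Then sup_{(x,y) ∈ Ω×Ω′} |f(x) + g(y)| = inf_{a ∈ ℝ} ( sup_{x ∈ Ω} |f(x) − a| + sup_{y ∈ Ω′} |g(y) + a| ). -/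
/-!
Write `M f` for `⨆ x, f x`. Since `|t| = max t (-t)` and suprema of `f x + g y` over a product
split as `M f + M g`, the left-hand side is `max (M f + M g) (M (-f) + M (-g))`. On the right,
`⨆ x, |f x - a| = max (M f - a) (M (-f) + a)` and likewise for `g`, so the infimum is one over
`a` of a sum of two maxima of affine functions; it is at least `max (M f + M g) (M (-f) + M (-g))`
for every `a`, with equality when `a` is the midpoint `(M f - M (-f)) / 2` of the range of `f`.
-/

open Set

section

variable {ι κ α : Type*} [ConditionallyCompleteLinearOrder α] [AddCommGroup α] {f : ι → α}

theorem bddAbove_range_of_abs_le {C : α} (h : ∀ i, |f i| ≤ C) : BddAbove (range f) :=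
  ⟨C, forall_mem_range.mpr fun i => (le_abs_self _).trans (h i)⟩

theorem bddAbove_range_neg_of_abs_le {C : α} (h : ∀ i, |f i| ≤ C) :
    BddAbove (range fun i => -f i) :=
  bddAbove_range_of_abs_le fun i => (abs_neg (f i)).trans_le (h i)

theorem ciSup_abs_eq_max {C : α} (h : ∀ i, |f i| ≤ C) :
    ⨆ i, |f i| = max (⨆ i, f i) (⨆ i, -f i) := by
  simp only [abs_eq_max_neg]
  exact ciSup_sup_eq (bddAbove_range_of_abs_le h) (bddAbove_range_neg_of_abs_le h)

variable [IsOrderedAddMonoid α] [Nonempty ι]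

theorem ciSup_add_ciSup [Nonempty κ] {g : κ → α} (hf : BddAbove (range f))
    (hg : BddAbove (range g)) : (⨆ i, f i) + (⨆ j, g j) = ⨆ p : ι × κ, f p.1 + g p.2 := by
  have hsum : BddAbove (range fun p : ι × κ => f p.1 + g p.2) :=
    ⟨_, forall_mem_range.mpr fun p => add_le_add (le_ciSup hf p.1) (le_ciSup hg p.2)⟩
  rw [ciSup_prod hsum, ciSup_add hf]
  exact iSup_congr fun i => add_ciSup hg (f i)

theorem ciSup_abs_sub_eq_max {C : α} (h : ∀ i, |f i| ≤ C) (c : α) :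
    ⨆ i, |f i - c| = max ((⨆ i, f i) - c) ((⨆ i, -f i) + c) := by
  have hsplit : ∀ i, |f i - c| = max (f i - c) (-f i + c) := fun i => by
    rw [abs_eq_max_neg]
    congr 1
    abel
  have hf := bddAbove_range_of_abs_le h
  have hf' := bddAbove_range_neg_of_abs_le h
  have hsub : BddAbove (range fun i => f i - c) :=
    hf.range_comp_left fun _ _ h => sub_le_sub_right h c
  have hadd : BddAbove (range fun i => -f i + c) :=
    hf'.range_comp_left fun _ _ h => add_le_add_left h c
  rw [iSup_congr hsplit, ciSup_sup_eq hsub hadd, ciSup_sub hf, ciSup_add hf']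

end

theorem ciInf_max_sub_add_max_add_sub (p q r s : ℝ) :
    ⨅ a, (max (p - a) (q + a) + max (r + a) (s - a)) = max (p + r) (q + s) := by
  have lower : ∀ a, max (p + r) (q + s) ≤ max (p - a) (q + a) + max (r + a) (s - a) := by
    intro a
    refine max_le ?_ ?_
    · linarith [le_max_left (p - a) (q + a), le_max_left (r + a) (s - a)]
    · linarith [le_max_right (p - a) (q + a), le_max_right (r + a) (s - a)]
  refine le_antisymm ?_ (le_ciInf lower)
  -- at `a = (p - q) / 2` the two entries of the first maximum coincide
  refine ciInf_le_of_le ⟨_, forall_mem_range.mpr lower⟩ ((p - q) / 2) (le_of_eq ?_)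
  rw [show p - (p - q) / 2 = (p + q) / 2 by ring, show q + (p - q) / 2 = (p + q) / 2 by ring,
    max_self, add_max]
  congr 1 <;> ring

/-- Sup norm of a direct sum (Remark 4.2): for bounded `f : Ω → ℝ` and `g : Ω' → ℝ`,
`sup_{(x,y)} |f(x) + g(y)| = inf_{a ∈ ℝ} (sup_x |f(x) - a| + sup_y |g(y) + a|)`. -/
theorem sup_norm_direct_sum
    (Ω Ω' : Type*) [Nonempty Ω] [Nonempty Ω']
    (f : Ω → ℝ) (g : Ω' → ℝ)
    (Cf : ℝ) (hf : ∀ x, |f x| ≤ Cf) (Cg : ℝ) (hg : ∀ y, |g y| ≤ Cg) :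
    (⨆ p : Ω × Ω', |f p.1 + g p.2|) =
      ⨅ a : ℝ, ((⨆ x, |f x - a|) + ⨆ y, |g y + a|) := by
  have hS : ⨆ p : Ω × Ω', |f p.1 + g p.2| =
      max ((⨆ x, f x) + ⨆ y, g y) ((⨆ x, -f x) + ⨆ y, -g y) := by
    rw [ciSup_add_ciSup (bddAbove_range_of_abs_le hf) (bddAbove_range_of_abs_le hg),
      ciSup_add_ciSup (bddAbove_range_neg_of_abs_le hf) (bddAbove_range_neg_of_abs_le hg)]
    simp only [← neg_add]
    exact ciSup_abs_eq_max fun p => (abs_add_le _ _).trans (add_le_add (hf p.1) (hg p.2))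
  have hV : ∀ a, (⨆ x, |f x - a|) + ⨆ y, |g y + a| =
      max ((⨆ x, f x) - a) ((⨆ x, -f x) + a) + max ((⨆ y, g y) + a) ((⨆ y, -g y) - a) := by
    intro a
    simpa only [sub_neg_eq_add, ← sub_eq_add_neg] using
      congrArg₂ (· + ·) (ciSup_abs_sub_eq_max hf a) (ciSup_abs_sub_eq_max hg (-a))
  rw [hS, iInf_congr hV, ciInf_max_sub_add_max_add_sub]
end

section
/- Mass lower bound for sections of the optimal support: let (f*,g*) be potentials. For every x ∈ Ω, Q({y ∈ Ω′ : f*(x)+g*(y)−c(x,y) ≥ ε/2}) ≥ inf_{y′∈Ω′} Q(B_{ε/(8L)}(y′)), and for every y ∈ Ω′, P({x ∈ Ω : f*(x)+g*(y)−c(x,y) ≥ ε/2}) ≥ inf_{x′∈Ω} P(B_{ε/(8L)}(x′)), where B_r(z) denotes the open Euclidean ball of radius r centered at z. -/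
open MeasureTheory Metric
open scoped NNReal

/-!
Fix `x`; the section `h y = f*(x) + g*(y) - c(x, y)` is `2L`-Lipschitz on `Ω'` and, by the
first-order condition, `∫ h₊ dQ = ε`. Since `Q` is a probability measure carried by `Ω'`, `h`
cannot stay below `3ε/4` on all of `Ω'`, so `h(y₀) > 3ε/4` for some `y₀ ∈ Ω'`. On the ball of
radius `ε/(8L)` around `y₀`, `h` drops by at most `2L · ε/(8L) = ε/4`, so that ball meets `Ω'`
inside the section `{h ≥ ε/2}`, and its `Q`-mass bounds the infimum. The case of a fixed `y` is
symmetric.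
-/

section

variable {E : Type*}

lemma exists_mem_lt_of_lt_integral_max_zero [MeasurableSpace E] {μ : Measure E}
    [IsProbabilityMeasure μ] {S : Set E} (hS : ∀ᵐ y ∂μ, y ∈ S) {h : E → ℝ} {t : ℝ}
    (ht : 0 ≤ t) (hlt : t < ∫ y, max (h y) 0 ∂μ) : ∃ y ∈ S, t < h y := by
  by_contra! hle
  have hint_le : ∫ y, max (h y) 0 ∂μ ≤ ∫ _, t ∂μ :=
    integral_mono_of_nonneg (ae_of_all _ fun y => le_max_right _ _) (integrable_const t)
      (hS.mono fun y hy => max_le (hle y hy) ht)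
  simp only [integral_const, probReal_univ, smul_eq_mul, one_mul] at hint_le
  linarith

lemma LipschitzOnWith.ball_inter_subset_setOf_le [PseudoMetricSpace E] {S : Set E}
    {h : E → ℝ} {K : ℝ≥0} (hh : LipschitzOnWith K h S) {y₀ : E} (hy₀ : y₀ ∈ S) {r s : ℝ}
    (hs : s + K * r ≤ h y₀) : ball y₀ r ∩ S ⊆ {y | y ∈ S ∧ s ≤ h y} := by
  rintro y ⟨hy, hyS⟩
  refine ⟨hyS, ?_⟩
  have hdrop : |h y - h y₀| ≤ K * dist y y₀ := by
    simpa only [Real.dist_eq] using hh.dist_le_mul y hyS y₀ hy₀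
  have hKr : K * dist y y₀ ≤ K * r := mul_le_mul_of_nonneg_left (mem_ball.mp hy).le K.coe_nonneg
  linarith [(abs_le.mp hdrop).1]

theorem iInf_measure_ball_le_measure_setOf_half_le [MeasurableSpace E] [PseudoMetricSpace E]
    {μ : Measure E} [IsProbabilityMeasure μ] {S : Set E} (hS : μ Sᶜ = 0) {h : E → ℝ}
    {K : ℝ≥0} (hh : LipschitzOnWith K h S) {ε r : ℝ} (hε : 0 < ε)
    (hint : ∫ y, max (h y) 0 ∂μ = ε) (hr : K * r ≤ ε / 4) :
    ⨅ y : S, μ (ball (y : E) r) ≤ μ {y | y ∈ S ∧ ε / 2 ≤ h y} := by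
  obtain ⟨y₀, hy₀S, hy₀⟩ := exists_mem_lt_of_lt_integral_max_zero (mem_ae_iff.mpr hS)
    (t := 3 * ε / 4) (by positivity) (by rw [hint]; linarith)
  calc ⨅ y : S, μ (ball (y : E) r)
      ≤ μ (ball y₀ r) := iInf_le (fun y : S => μ (ball (y : E) r)) ⟨y₀, hy₀S⟩
    _ = μ (ball y₀ r ∩ S) := (measure_inter_conull hS).symm
    _ ≤ μ {y | y ∈ S ∧ ε / 2 ≤ h y} :=
        measure_mono (hh.ball_inter_subset_setOf_le hy₀S (by linarith))

end

section

variable {α β : Type*} [PseudoMetricSpace α] [PseudoMetricSpace β] {c : α → β → ℝ} {K : ℝ≥0}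

lemma LipschitzWith.lipschitzOnWith_const_add_sub (hc : LipschitzWith K (Function.uncurry c))
    {g : β → ℝ} {s : Set β} (hg : LipschitzOnWith K g s) (a : ℝ) (x : α) :
    LipschitzOnWith (K + K) (fun y => a + g y - c x y) s := by
  simpa using ((LipschitzWith.const a).lipschitzOnWith.add hg).sub
    (hc.comp (LipschitzWith.prodMk_left x)).lipschitzOnWith

lemma LipschitzWith.lipschitzOnWith_add_const_sub (hc : LipschitzWith K (Function.uncurry c))
    {f : α → ℝ} {s : Set α} (hf : LipschitzOnWith K f s) (b : ℝ) (y : β) :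
    LipschitzOnWith (K + K) (fun x => f x + b - c x y) s := by
  simpa using (hf.add (LipschitzWith.const b).lipschitzOnWith).sub
    (hc.comp (LipschitzWith.prodMk_right y)).lipschitzOnWith

end

theorem section_mass_lower_bound_general
    (d : ℕ) (ε : ℝ) (hε : 0 < ε)
    (Ω Ω' : Set (EuclideanSpace ℝ (Fin d)))
    (hΩc : IsCompact Ω)
    (P Q : Measure (EuclideanSpace ℝ (Fin d)))
    [IsProbabilityMeasure P] [IsProbabilityMeasure Q]
    (ρ : EuclideanSpace ℝ (Fin d) → ℝ)
    (hPdef : P = (volume.restrict Ω).withDensity fun x => ENNReal.ofReal (ρ x))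
    (hQsupp : Q Ω'ᶜ = 0)
    (c : EuclideanSpace ℝ (Fin d) → EuclideanSpace ℝ (Fin d) → ℝ)
    (L : ℝ) (hL : 0 < L)
    (hc : LipschitzWith (Real.toNNReal L) (Function.uncurry c))
    (fStar gStar : EuclideanSpace ℝ (Fin d) → ℝ)
    (hfsLip : LipschitzOnWith (Real.toNNReal L) fStar Ω)
    (hgsLip : LipschitzOnWith (Real.toNNReal L) gStar Ω')
    (hFOC1 : ∀ x ∈ Ω, ∫ y, max (fStar x + gStar y - c x y) 0 ∂Q = ε)
    (hFOC2 : ∀ y ∈ Ω', ∫ x, max (fStar x + gStar y - c x y) 0 ∂P = ε) :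
    (∀ x ∈ Ω,
      (⨅ y' : Ω', Q (Metric.ball (y' : EuclideanSpace ℝ (Fin d)) (ε / (8 * L)))) ≤
        Q {y | y ∈ Ω' ∧ ε / 2 ≤ fStar x + gStar y - c x y}) ∧
    (∀ y ∈ Ω',
      (⨅ x' : Ω, P (Metric.ball (x' : EuclideanSpace ℝ (Fin d)) (ε / (8 * L)))) ≤
        P {x | x ∈ Ω ∧ ε / 2 ≤ fStar x + gStar y - c x y}) := by
  have hPsupp : P Ωᶜ = 0 := by
    rw [hPdef]
    exact withDensity_absolutelyContinuous _ _
      (mem_ae_iff.mp (ae_restrict_mem hΩc.isClosed.measurableSet))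
  have hr : ((L.toNNReal + L.toNNReal : ℝ≥0) : ℝ) * (ε / (8 * L)) ≤ ε / 4 := by
    rw [NNReal.coe_add, Real.coe_toNNReal _ hL.le]
    field_simp
    linarith
  exact ⟨fun x hx => iInf_measure_ball_le_measure_setOf_half_le hQsupp
      (hc.lipschitzOnWith_const_add_sub hgsLip _ x) hε (hFOC1 x hx) hr,
    fun y hy => iInf_measure_ball_le_measure_setOf_half_le hPsupp
      (hc.lipschitzOnWith_add_const_sub hfsLip _ y) hε (hFOC2 y hy) hr⟩

/-- Mass lower bound for the sections of the optimal support (Remark 3.7 / Eq. (3.8)):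
each `ε/2`-section of `{f* ⊕ g* - c ≥ ε/2}` contains a ball of radius `ε/(8L)`
intersected with the support, hence carries at least the infimal ball mass. -/
theorem section_mass_lower_bound
    (d : ℕ) (hd : 1 ≤ d) (ε : ℝ) (hε : 0 < ε)
    (Ω Ω' : Set (EuclideanSpace ℝ (Fin d)))
    (hΩc : IsCompact Ω) (hΩconv : Convex ℝ Ω) (hΩne : Ω.Nonempty)
    (hΩ'c : IsCompact Ω') (hΩ'ne : Ω'.Nonempty)
    (P Q : Measure (EuclideanSpace ℝ (Fin d)))
    [IsProbabilityMeasure P] [IsProbabilityMeasure Q]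
    (ρ : EuclideanSpace ℝ (Fin d) → ℝ) (hρm : Measurable ρ)
    (lamP LamP : ℝ) (hlam : 0 < lamP)
    (hPdef : P = (volume.restrict Ω).withDensity fun x => ENNReal.ofReal (ρ x))
    (hρlb : ∀ x ∈ Ω, lamP ≤ ρ x) (hρub : ∀ x ∈ Ω, ρ x ≤ LamP)
    (hQsupp : Q Ω'ᶜ = 0)
    (c : EuclideanSpace ℝ (Fin d) → EuclideanSpace ℝ (Fin d) → ℝ)
    (L : ℝ) (hL : 0 < L)
    (hc : LipschitzWith (Real.toNNReal L) (Function.uncurry c))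
    (fStar gStar : EuclideanSpace ℝ (Fin d) → ℝ)
    (hfsLip : LipschitzOnWith (Real.toNNReal L) fStar Ω)
    (hgsLip : LipschitzOnWith (Real.toNNReal L) gStar Ω')
    (hFOC1 : ∀ x ∈ Ω, ∫ y, max (fStar x + gStar y - c x y) 0 ∂Q = ε)
    (hFOC2 : ∀ y ∈ Ω', ∫ x, max (fStar x + gStar y - c x y) 0 ∂P = ε) :
    (∀ x ∈ Ω,
      (⨅ y' : Ω', Q (Metric.ball (y' : EuclideanSpace ℝ (Fin d)) (ε / (8 * L)))) ≤
        Q {y | y ∈ Ω' ∧ ε / 2 ≤ fStar x + gStar y - c x y}) ∧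
    (∀ y ∈ Ω',
      (⨅ x' : Ω, P (Metric.ball (x' : EuclideanSpace ℝ (Fin d)) (ε / (8 * L)))) ≤
        P {x | x ∈ Ω ∧ ε / 2 ≤ fStar x + gStar y - c x y}) :=
  section_mass_lower_bound_general d ε hε Ω Ω' hΩc P Q ρ hPdef hQsupp c L hL hc fStar gStar hfsLip
    hgsLip hFOC1 hFOC2
end
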